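/- arXiv:1709.01466 — 4 statements merged into one kernel-verified Lean document; each statement's English description precedes it below -/
import Mathlib

section
/- The number of parking sequences satisfies the recurrence f(y_1,...,y_n, y_{n+1}; z) = ∑_{L ⊔ R = {1,...,n}} (z + ∑_{l ∈ L} y_l) · f(y_L; z) · f(y_R; 1), where the sum is over ordered pairs of disjoint sets L, R with union {1,...,n}, and y_S denotes the subsequence of sizes indexed by S in increasing order. -/
/-!
In a successful parking all spots end up occupied, so the last car, parking at some spot `j`,
fills a gap `j, …, j + y_{n+1} - 1` left empty by the first `n` cars. No car drives across an
empty spot, so these split into the cars `L` preferring a spot before `j`, which form a parking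
sequence of spots `1, …, j - 1` behind the trailer, and the others, which form a parking sequence
without trailer of the spots after the gap. Counting occupied spots gives
`j = z + ∑_{l ∈ L} y_l`, and the last car may prefer any spot in `1, …, j`. Conversely, any such
data interleave to a parking sequence from which they can be read off again.
-/

/-- The first empty spot `j ≥ c`, given the finite set `occ` of occupied spots. -/
def firstFree (occ : Finset ℕ) (c : ℕ) : ℕ :=
  Nat.find (p := fun j => c ≤ j ∧ j ∉ occ)
    (by
      refine ⟨occ.sup id + c + 1, by omega, fun h => ?_⟩
      have := Finset.le_sup (f := id) h
      simp only [id] at this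
      omega)

/-- One step of the parking process on spots `1, …, N`: the car with preference and
size `cs = (c, s)` drives to the first empty spot `j ≥ c` and parks in spots
`j, …, j+s-1` if they are all empty and within the `N` spots; otherwise failure. -/
def parkStep (N : ℕ) (occ : Option (Finset ℕ)) (cs : ℕ × ℕ) : Option (Finset ℕ) :=
  match occ with
  | none => none
  | some occ =>
    let j := firstFree occ cs.1
    if j + cs.2 - 1 ≤ N ∧ ∀ k ∈ Finset.Ico j (j + cs.2), k ∉ occ then
      some (occ ∪ Finset.Ico j (j + cs.2))
    else none

/-- The result of letting cars `C₁, …, Cₙ` of sizes `y` and preferences `c` park in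
order on `z - 1 + ∑ y i` spots, where the first `z - 1` spots are occupied by a
trailer: `some occ` records the occupied spots, `none` records failure. -/
def parkFold (n : ℕ) (y : Fin n → ℕ) (z : ℕ) (c : Fin n → ℕ) : Option (Finset ℕ) :=
  (List.ofFn fun i : Fin n => ((c i, y i) : ℕ × ℕ)).foldl
    (parkStep (z - 1 + ∑ i, y i)) (some (Finset.Ico 1 z))

/-- `(c₁, …, cₙ)` is a parking sequence for car sizes `y` and a trailer of length
`z - 1` if all preferences are genuine spots and all cars park successfully. -/
def IsParkingSeq (n : ℕ) (y : Fin n → ℕ) (z : ℕ) (c : Fin n → ℕ) : Prop :=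
  (∀ i, 1 ≤ c i) ∧ parkFold n y z c ≠ none

instance (n : ℕ) (y : Fin n → ℕ) (z : ℕ) : DecidablePred (IsParkingSeq n y z) :=
  fun c => by unfold IsParkingSeq; infer_instance

/-- The number of parking sequences for car sizes `y` and a trailer of length `z - 1`. -/
def numPark (n : ℕ) (y : Fin n → ℕ) (z : ℕ) : ℕ :=
  ((Fintype.piFinset fun _ : Fin n => Finset.Icc 1 (z - 1 + ∑ i, y i)).filter
    (IsParkingSeq n y z)).card

open Finset

lemma le_firstFree (occ : Finset ℕ) (c : ℕ) : c ≤ firstFree occ c :=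
  (Nat.find_spec (p := fun j => c ≤ j ∧ j ∉ occ) _).1

lemma firstFree_notMem (occ : Finset ℕ) (c : ℕ) : firstFree occ c ∉ occ :=
  (Nat.find_spec (p := fun j => c ≤ j ∧ j ∉ occ) _).2

lemma mem_of_le_of_lt_firstFree {occ : Finset ℕ} {c k : ℕ} (hck : c ≤ k)
    (hk : k < firstFree occ c) : k ∈ occ := by
  by_contra hkocc
  exact Nat.find_min (p := fun j => c ≤ j ∧ j ∉ occ) _ hk ⟨hck, hkocc⟩

lemma firstFree_eq {occ : Finset ℕ} {c f : ℕ} (hcf : c ≤ f) (hf : f ∉ occ)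
    (hocc : ∀ k, c ≤ k → k < f → k ∈ occ) : firstFree occ c = f := by
  refine le_antisymm (Nat.find_min' _ ⟨hcf, hf⟩) (not_lt.mp fun hlt => ?_)
  exact firstFree_notMem occ c (hocc _ (le_firstFree occ c) hlt)

lemma firstFree_Icc_union_Icc {a m o N : ℕ} (ha : 1 ≤ a) (ham : a ≤ m + 1) (hmo : m < o) :
    firstFree (Icc 1 m ∪ Icc (o + 1) N) a = m + 1 :=
  firstFree_eq ham (by simp only [mem_union, mem_Icc]; omega)
    fun k hak hk => by simp only [mem_union, mem_Icc]; omega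

lemma parkStep_some_eq_some_iff {N c t : ℕ} {occ occ' : Finset ℕ} :
    parkStep N (some occ) (c, t) = some occ' ↔
      (firstFree occ c + t - 1 ≤ N ∧
        ∀ k ∈ Ico (firstFree occ c) (firstFree occ c + t), k ∉ occ) ∧
      occ' = occ ∪ Ico (firstFree occ c) (firstFree occ c + t) := by
  change (if _ then _ else _) = _ ↔ _
  split_ifs with h
  · exact ⟨fun he => ⟨h, (Option.some_inj.mp he).symm⟩, fun hp => congrArg some hp.2.symm⟩
  · exact ⟨fun he => by simp at he, fun hp => absurd hp.1 h⟩

lemma foldl_parkStep_none (N : ℕ) (l : List (ℕ × ℕ)) : l.foldl (parkStep N) none = none := by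
  induction l with
  | nil => rfl
  | cons _ _ ih => exact ih

lemma foldl_parkStep_cons_eq_some_iff {N : ℕ} {p : ℕ × ℕ} {l : List (ℕ × ℕ)}
    {occ occ' : Finset ℕ} :
    (p :: l).foldl (parkStep N) (some occ) = some occ' ↔
      ∃ occ₁, parkStep N (some occ) p = some occ₁ ∧
        l.foldl (parkStep N) (some occ₁) = some occ' := by
  rw [List.foldl_cons]
  cases parkStep N (some occ) p <;> simp [foldl_parkStep_none]

section Run

variable {N : ℕ} {l : List (ℕ × ℕ)} {occ occ' : Finset ℕ}

lemma subset_of_foldl_parkStep (h : l.foldl (parkStep N) (some occ) = some occ') :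
    occ ⊆ occ' := by
  induction l generalizing occ with
  | nil => simp_all
  | cons p l ih =>
    obtain ⟨occ₁, h₁, h⟩ := foldl_parkStep_cons_eq_some_iff.mp h
    rw [(parkStep_some_eq_some_iff.mp h₁).2] at h
    exact subset_union_left.trans (ih h)

lemma card_of_foldl_parkStep (h : l.foldl (parkStep N) (some occ) = some occ') :
    occ'.card = occ.card + (l.map Prod.snd).sum := by
  induction l generalizing occ with
  | nil => simp_all
  | cons p l ih =>
    obtain ⟨occ₁, h₁, h⟩ := foldl_parkStep_cons_eq_some_iff.mp h
    obtain ⟨⟨-, hdisj⟩, rfl⟩ := parkStep_some_eq_some_iff.mp h₁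
    rw [ih h, card_union_of_disjoint (disjoint_right.mpr hdisj), Nat.card_Ico,
      List.map_cons, List.sum_cons]
    omega

lemma parkStep_subset_Icc {c t : ℕ} (hc : 1 ≤ c) (hocc : occ ⊆ Icc 1 N)
    (h : parkStep N (some occ) (c, t) = some occ') : occ' ⊆ Icc 1 N := by
  obtain ⟨⟨hN, -⟩, rfl⟩ := parkStep_some_eq_some_iff.mp h
  have := le_firstFree occ c
  refine union_subset hocc fun k hk => ?_
  simp only [mem_Ico, mem_Icc] at hk ⊢
  omega

lemma foldl_parkStep_subset_Icc (hl : ∀ p ∈ l, 1 ≤ p.1) (hocc : occ ⊆ Icc 1 N)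
    (h : l.foldl (parkStep N) (some occ) = some occ') : occ' ⊆ Icc 1 N := by
  induction l generalizing occ with
  | nil => simp_all
  | cons p l ih =>
    obtain ⟨occ₁, h₁, h⟩ := foldl_parkStep_cons_eq_some_iff.mp h
    exact ih (fun q hq => hl q (List.mem_cons_of_mem _ hq))
      (parkStep_subset_Icc (hl p List.mem_cons_self) hocc h₁) h

/-- A car's preferred spot is taken once it has parked: either by itself, or already when it
arrived. -/
lemma fst_mem_of_foldl_parkStep (hl : ∀ p ∈ l, 1 ≤ p.2)
    (h : l.foldl (parkStep N) (some occ) = some occ') : ∀ p ∈ l, p.1 ∈ occ' := by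
  induction l generalizing occ with
  | nil => simp
  | cons p l ih =>
    obtain ⟨occ₁, h₁, h⟩ := foldl_parkStep_cons_eq_some_iff.mp h
    rintro q (_ | ⟨_, hq⟩)
    · obtain ⟨c, t⟩ := p
      obtain ⟨-, rfl⟩ := parkStep_some_eq_some_iff.mp h₁
      refine subset_of_foldl_parkStep h ?_
      have ht := hl (c, t) List.mem_cons_self
      rcases (le_firstFree occ c).lt_or_eq with hlt | heq
      · exact mem_union_left _ (mem_of_le_of_lt_firstFree le_rfl hlt)
      · exact mem_union_right _ (mem_Ico.mpr ⟨heq.ge, by simp only at ht; omega⟩)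
    · exact ih (fun q hq => hl q (List.mem_cons_of_mem _ hq)) h q hq

lemma eq_Icc_of_foldl_parkStep (hl : ∀ p ∈ l, 1 ≤ p.1) (hocc : occ ⊆ Icc 1 N)
    (hvol : occ.card + (l.map Prod.snd).sum = N)
    (h : l.foldl (parkStep N) (some occ) = some occ') : occ' = Icc 1 N :=
  eq_of_subset_of_card_le (foldl_parkStep_subset_Icc hl hocc h)
    (by rw [card_of_foldl_parkStep h, hvol, Nat.card_Icc]; omega)

end Run

lemma mem_image_add_right_iff {s : Finset ℕ} {o k : ℕ} :
    k ∈ s.image (· + o) ↔ o ≤ k ∧ k - o ∈ s := by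
  constructor
  · intro hk
    obtain ⟨r, hr, rfl⟩ := mem_image.mp hk
    simpa using hr
  · rintro ⟨hok, hk⟩
    exact mem_image.mpr ⟨k - o, hk, by omega⟩

section Segments

/-! Spots `1, …, m` form a left street and spots `o + 1, …, N` a right street, with the hole
`m + 1, …, o` between them. The state `LO ∪ RO.image (· + o)` records the occupied spots `LO` of
the left street and `RO` of the right street, the latter numbered from `1`. -/

variable {m o N c t : ℕ} {LO RO LO' RO' occ' : Finset ℕ}

lemma parkStep_union_image_of_left (hmo : m ≤ o) (hoN : o ≤ N) (ht : 1 ≤ t)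
    (hRO : ∀ r ∈ RO, 1 ≤ r) (h : parkStep m (some LO) (c, t) = some LO') :
    parkStep N (some (LO ∪ RO.image (· + o))) (c, t) = some (LO' ∪ RO.image (· + o)) := by
  obtain ⟨⟨hfit, hdisj⟩, rfl⟩ := parkStep_some_eq_some_iff.mp h
  have hRO' : ∀ k ∈ RO.image (· + o), m < k := fun k hk => by
    obtain ⟨hok, hk⟩ := mem_image_add_right_iff.mp hk
    have := hRO _ hk
    omega
  have hkey : firstFree (LO ∪ RO.image (· + o)) c = firstFree LO c := by
    refine firstFree_eq (le_firstFree LO c) ?_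
      fun k hck hk => mem_union_left _ (mem_of_le_of_lt_firstFree hck hk)
    rw [mem_union, not_or]
    exact ⟨firstFree_notMem LO c, fun h => by have := hRO' _ h; omega⟩
  rw [parkStep_some_eq_some_iff, hkey, union_right_comm]
  refine ⟨⟨by omega, fun k hk hkC => ?_⟩, rfl⟩
  rcases mem_union.mp hkC with hkL | hkR
  · exact hdisj k hk hkL
  · have := hRO' k hkR
    rw [mem_Ico] at hk
    omega

lemma parkStep_union_image_of_right (hmo : m ≤ o) (hoN : o ≤ N) (hoc : o < c)
    (hLO : ∀ k ∈ LO, k ≤ m) (h : parkStep (N - o) (some RO) (c - o, t) = some RO') :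
    parkStep N (some (LO ∪ RO.image (· + o))) (c, t) = some (LO ∪ RO'.image (· + o)) := by
  obtain ⟨⟨hfit, hdisj⟩, rfl⟩ := parkStep_some_eq_some_iff.mp h
  set f := firstFree RO (c - o)
  have hf : c - o ≤ f := le_firstFree RO (c - o)
  have hkey : firstFree (LO ∪ RO.image (· + o)) c = f + o := by
    refine firstFree_eq (by omega) ?_ fun k hck hk => ?_
    · rw [mem_union, not_or, mem_image_add_right_iff]
      exact ⟨fun h => by have := hLO _ h; omega,
        fun h => firstFree_notMem RO (c - o) (by simpa using h.2)⟩
    · exact mem_union_right _ (mem_image_add_right_iff.mpr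
        ⟨by omega, mem_of_le_of_lt_firstFree (c := c - o) (by omega) (by omega)⟩)
  rw [parkStep_some_eq_some_iff, hkey]
  refine ⟨⟨by omega, fun k hk hkC => ?_⟩, ?_⟩
  · rw [mem_Ico] at hk
    rcases mem_union.mp hkC with hkL | hkR
    · have := hLO k hkL
      omega
    · exact hdisj (k - o) (mem_Ico.mpr (by omega)) (mem_image_add_right_iff.mp hkR).2
  · rw [image_union, image_add_right_Ico, union_assoc, Nat.add_right_comm f t o]

lemma exists_parkStep_of_union_image_of_left (hmo : m < o) (hcm : c ≤ m) (ht : 1 ≤ t)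
    (h : parkStep N (some (LO ∪ RO.image (· + o))) (c, t) = some occ')
    (hhole : ∀ k, m < k → k ≤ o → k ∉ occ') :
    ∃ LO', parkStep m (some LO) (c, t) = some LO' := by
  obtain ⟨⟨-, hdisj⟩, rfl⟩ := parkStep_some_eq_some_iff.mp h
  set C := LO ∪ RO.image (· + o)
  set f := firstFree C c
  have hcf : c ≤ f := le_firstFree C c
  have hblock : ∀ k, f ≤ k → k < f + t → ¬(m < k ∧ k ≤ o) := fun k hfk hk hkhole =>
    hhole k hkhole.1 hkhole.2 (mem_union_right _ (mem_Ico.mpr ⟨hfk, hk⟩))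
  have hfm : f ≤ m := by
    by_contra! hmf
    by_cases hfo : f ≤ o
    · exact hblock f le_rfl (by omega) ⟨hmf, hfo⟩
    · exact hhole (m + 1) (by omega) (by omega)
        (mem_union_left _ (mem_of_le_of_lt_firstFree (c := c) (by omega) (by omega)))
  have hfit : f + t - 1 ≤ m := by
    by_contra!
    exact hblock (m + 1) (by omega) (by omega) ⟨by omega, by omega⟩
  have hkey : firstFree LO c = f := by
    refine firstFree_eq hcf (fun hf => firstFree_notMem C c (mem_union_left _ hf))
      fun k hck hk => ?_
    rcases mem_union.mp (mem_of_le_of_lt_firstFree hck hk) with hkL | hkR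
    · exact hkL
    · have := (mem_image_add_right_iff.mp hkR).1
      omega
  exact ⟨_, parkStep_some_eq_some_iff.mpr ⟨⟨by rw [hkey]; exact hfit,
    fun k hk hkL => hdisj k (by rwa [hkey] at hk) (mem_union_left _ hkL)⟩, rfl⟩⟩

lemma exists_parkStep_of_union_image_of_right (hmo : m ≤ o) (hoc : o < c)
    (hLO : ∀ k ∈ LO, k ≤ m) (h : parkStep N (some (LO ∪ RO.image (· + o))) (c, t) = some occ') :
    ∃ RO', parkStep (N - o) (some RO) (c - o, t) = some RO' := by
  obtain ⟨⟨hfit, hdisj⟩, -⟩ := parkStep_some_eq_some_iff.mp h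
  set C := LO ∪ RO.image (· + o)
  set f := firstFree C c
  have hcf : c ≤ f := le_firstFree C c
  have hkey : firstFree RO (c - o) = f - o := by
    refine firstFree_eq (by omega) (fun hf => firstFree_notMem C c
      (mem_union_right _ (mem_image_add_right_iff.mpr ⟨by omega, hf⟩))) fun k hck hk => ?_
    rcases mem_union.mp (mem_of_le_of_lt_firstFree (occ := C) (c := c) (k := k + o)
      (by omega) (by omega)) with hkL | hkR
    · have := hLO _ hkL
      omega
    · simpa using (mem_image_add_right_iff.mp hkR).2
  refine ⟨_, parkStep_some_eq_some_iff.mpr ⟨⟨by rw [hkey]; omega, fun k hk hkR => ?_⟩, rfl⟩⟩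
  rw [hkey, mem_Ico] at hk
  exact hdisj (k + o) (mem_Ico.mpr (by omega))
    (mem_union_right _ (mem_image_add_right_iff.mpr ⟨by omega, by simpa using hkR⟩))

def leftCars (m : ℕ) (l : List (ℕ × ℕ)) : List (ℕ × ℕ) :=
  l.filter (·.1 ≤ m)

def rightCars (o : ℕ) (l : List (ℕ × ℕ)) : List (ℕ × ℕ) :=
  (l.filter (o < ·.1)).map fun p => (p.1 - o, p.2)

variable {l : List (ℕ × ℕ)}

lemma foldl_parkStep_union_image (hmo : m ≤ o) (hoN : o ≤ N)
    (hl : ∀ p ∈ l, 1 ≤ p.1 ∧ 1 ≤ p.2) (hgap : ∀ p ∈ l, p.1 ≤ m ∨ o < p.1)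
    (hLO : LO ⊆ Icc 1 m) (hRO : RO ⊆ Icc 1 (N - o))
    (hleft : (leftCars m l).foldl (parkStep m) (some LO) = some LO')
    (hright : (rightCars o l).foldl (parkStep (N - o)) (some RO) = some RO') :
    l.foldl (parkStep N) (some (LO ∪ RO.image (· + o))) = some (LO' ∪ RO'.image (· + o)) := by
  induction l generalizing LO RO with
  | nil => simp_all [leftCars, rightCars]
  | cons p l ih =>
    obtain ⟨c, t⟩ := p
    obtain ⟨hc, ht⟩ := hl _ List.mem_cons_self
    have hl' := fun q hq => hl q (List.mem_cons_of_mem _ hq)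
    have hgap' := fun q hq => hgap q (List.mem_cons_of_mem _ hq)
    rw [List.foldl_cons]
    rcases hgap _ List.mem_cons_self with hcm | hoc
    · simp only [leftCars, rightCars, List.filter_cons, decide_eq_true hcm,
        show ¬o < c by omega, decide_false, if_true, Bool.false_eq_true, if_false] at hleft hright
      obtain ⟨LO₁, h₁, hleft⟩ := foldl_parkStep_cons_eq_some_iff.mp hleft
      rw [parkStep_union_image_of_left hmo hoN ht
        (fun r hr => (mem_Icc.mp (hRO hr)).1) h₁]
      exact ih hl' hgap' (parkStep_subset_Icc hc hLO h₁) hRO hleft hright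
    · simp only [leftCars, rightCars, List.filter_cons, decide_eq_true hoc,
        show ¬c ≤ m by omega, decide_false, if_true, Bool.false_eq_true, if_false,
        List.map_cons] at hleft hright
      obtain ⟨RO₁, h₁, hright⟩ := foldl_parkStep_cons_eq_some_iff.mp hright
      rw [parkStep_union_image_of_right hmo hoN hoc
        (fun k hk => (mem_Icc.mp (hLO hk)).2) h₁]
      exact ih hl' hgap' hLO (parkStep_subset_Icc (by omega) hRO h₁) hleft hright

lemma exists_foldl_leftCars_rightCars (hmo : m < o) (hoN : o ≤ N)
    (hl : ∀ p ∈ l, 1 ≤ p.1 ∧ 1 ≤ p.2) (hLO : LO ⊆ Icc 1 m) (hRO : RO ⊆ Icc 1 (N - o))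
    (h : l.foldl (parkStep N) (some (LO ∪ RO.image (· + o))) = some occ')
    (hhole : ∀ k, m < k → k ≤ o → k ∉ occ') :
    ∃ LO' RO', (leftCars m l).foldl (parkStep m) (some LO) = some LO' ∧
      (rightCars o l).foldl (parkStep (N - o)) (some RO) = some RO' := by
  induction l generalizing LO RO with
  | nil => exact ⟨LO, RO, rfl, rfl⟩
  | cons p l ih =>
    obtain ⟨c, t⟩ := p
    obtain ⟨hc, ht⟩ := hl _ List.mem_cons_self
    have hl' := fun q hq => hl q (List.mem_cons_of_mem _ hq)
    have hc_mem : c ∈ occ' :=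
      fst_mem_of_foldl_parkStep (fun q hq => (hl q hq).2) h _ List.mem_cons_self
    obtain ⟨occ₁, h₁, h⟩ := foldl_parkStep_cons_eq_some_iff.mp h
    by_cases hcm : c ≤ m
    · simp only [leftCars, rightCars, List.filter_cons, decide_eq_true hcm,
        show ¬o < c by omega, decide_false, if_true, Bool.false_eq_true, if_false]
      obtain ⟨LO₁, hLO₁⟩ := exists_parkStep_of_union_image_of_left hmo hcm ht h₁
        fun k hmk hko hk => hhole k hmk hko (subset_of_foldl_parkStep h hk)
      rw [parkStep_union_image_of_left hmo.le hoN ht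
        (fun r hr => (mem_Icc.mp (hRO hr)).1) hLO₁, Option.some_inj] at h₁
      subst h₁
      obtain ⟨LO', RO', hleft, hright⟩ := ih hl' (parkStep_subset_Icc hc hLO hLO₁) hRO h
      exact ⟨LO', RO', by rwa [List.foldl_cons, hLO₁], hright⟩
    · have hoc : o < c := by
        by_contra!
        exact hhole c (by omega) this hc_mem
      simp only [leftCars, rightCars, List.filter_cons, decide_eq_true hoc, hcm,
        decide_false, if_true, Bool.false_eq_true, if_false, List.map_cons]
      have hLOm : ∀ k ∈ LO, k ≤ m := fun k hk => (mem_Icc.mp (hLO hk)).2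
      obtain ⟨RO₁, hRO₁⟩ := exists_parkStep_of_union_image_of_right hmo.le hoc hLOm h₁
      rw [parkStep_union_image_of_right hmo.le hoN hoc hLOm hRO₁, Option.some_inj] at h₁
      subst h₁
      obtain ⟨LO', RO', hleft, hright⟩ :=
        ih hl' hLO (parkStep_subset_Icc (by omega) hRO hRO₁) h
      exact ⟨LO', RO', hleft, by rwa [List.foldl_cons, hRO₁]⟩

end Segments

section Interleave

variable {α : Type*} {n : ℕ} (L : Finset (Fin n))

def subseq (g : Fin n → α) : Fin L.card → α := fun k => g (L.orderIsoOfFin rfl k)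

def interleave (a : Fin L.card → α) (b : Fin Lᶜ.card → α) : Fin n → α := fun i =>
  if h : i ∈ L then a ((L.orderIsoOfFin rfl).symm ⟨i, h⟩)
  else b ((Lᶜ.orderIsoOfFin rfl).symm ⟨i, mem_compl.mpr h⟩)

lemma sort_eq_filter_finRange : L.sort = (List.finRange n).filter (· ∈ L) := by
  refine List.Perm.eq_of_pairwise' (pairwise_sort L (· ≤ ·))
    ((List.pairwise_lt_finRange n).filter _ |>.imp le_of_lt) ?_
  refine (List.perm_ext_iff_of_nodup (sort_nodup _ _) ((List.nodup_finRange n).filter _)).mpr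
    fun i => ?_
  simp

lemma ofFn_subseq (g : Fin n → α) :
    List.ofFn (subseq L g) = ((List.finRange n).filter (· ∈ L)).map g := by
  rw [← sort_eq_filter_finRange, ← listMap_orderEmbOfFin_finRange L rfl, List.map_map,
    List.ofFn_eq_map]
  rfl

lemma filter_ofFn_eq_ofFn_subseq {g : Fin n → α} {q : α → Bool} (hq : ∀ i, q (g i) ↔ i ∈ L) :
    (List.ofFn g).filter q = List.ofFn (subseq L g) := by
  rw [ofFn_subseq, List.ofFn_eq_map, List.filter_map]
  congr 1
  exact List.filter_congr fun i _ => Bool.eq_iff_iff.mpr (by simpa using hq i)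

lemma sum_subseq {M : Type*} [AddCommMonoid M] (g : Fin n → M) :
    ∑ k, subseq L g k = ∑ i ∈ L, g i := by
  rw [← sum_coe_sort L g]
  exact Fintype.sum_equiv (L.orderIsoOfFin rfl).toEquiv _ _ fun _ => rfl

variable {L}

lemma interleave_of_mem (a : Fin L.card → α) (b : Fin Lᶜ.card → α) {i : Fin n} (h : i ∈ L) :
    interleave L a b i = a ((L.orderIsoOfFin rfl).symm ⟨i, h⟩) :=
  dif_pos h

lemma interleave_of_notMem (a : Fin L.card → α) (b : Fin Lᶜ.card → α) {i : Fin n}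
    (h : i ∉ L) :
    interleave L a b i = b ((Lᶜ.orderIsoOfFin rfl).symm ⟨i, mem_compl.mpr h⟩) :=
  dif_neg h

@[simp]
lemma subseq_interleave_left (a : Fin L.card → α) (b : Fin Lᶜ.card → α) :
    subseq L (interleave L a b) = a := by
  funext k
  rw [subseq, interleave_of_mem _ _ (L.orderIsoOfFin rfl k).2]
  exact congrArg a (OrderIso.symm_apply_apply _ _)

@[simp]
lemma subseq_interleave_right (a : Fin L.card → α) (b : Fin Lᶜ.card → α) :
    subseq Lᶜ (interleave L a b) = b := by
  funext k
  rw [subseq, interleave_of_notMem _ _ (mem_compl.mp (Lᶜ.orderIsoOfFin rfl k).2)]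
  exact congrArg b (OrderIso.symm_apply_apply _ _)

lemma interleave_subseq (g : Fin n → α) : interleave L (subseq L g) (subseq Lᶜ g) = g := by
  funext i
  by_cases h : i ∈ L
  · rw [interleave_of_mem _ _ h, subseq, OrderIso.apply_symm_apply]
  · rw [interleave_of_notMem _ _ h, subseq, OrderIso.apply_symm_apply]

lemma forall_interleave {p : α → Prop} {a : Fin L.card → α} {b : Fin Lᶜ.card → α}
    (ha : ∀ k, p (a k)) (hb : ∀ k, p (b k)) (i : Fin n) : p (interleave L a b i) := by
  by_cases h : i ∈ L
  · rw [interleave_of_mem _ _ h]; exact ha _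
  · rw [interleave_of_notMem _ _ h]; exact hb _

end Interleave

def cars {n : ℕ} (c y : Fin n → ℕ) : List (ℕ × ℕ) := List.ofFn fun i => (c i, y i)

def parkingSeqs (n : ℕ) (y : Fin n → ℕ) (z : ℕ) : Finset (Fin n → ℕ) :=
  (Fintype.piFinset fun _ : Fin n => Icc 1 (z - 1 + ∑ i, y i)).filter (IsParkingSeq n y z)

section Cars

variable {n : ℕ} {c y : Fin n → ℕ} {z : ℕ}

lemma parkFold_eq_foldl_cars :
    parkFold n y z c = (cars c y).foldl (parkStep (z - 1 + ∑ i, y i)) (some (Ico 1 z)) :=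
  rfl

lemma forall_mem_cars {P : ℕ × ℕ → Prop} : (∀ p ∈ cars c y, P p) ↔ ∀ i, P (c i, y i) :=
  List.forall_mem_ofFn_iff

lemma sum_map_snd_cars : ((cars c y).map Prod.snd).sum = ∑ i, y i := by
  rw [cars, List.map_ofFn, List.sum_ofFn]
  rfl

lemma leftCars_cars {L : Finset (Fin n)} {m : ℕ} (hL : ∀ i, c i ≤ m ↔ i ∈ L) :
    leftCars m (cars c y) = cars (subseq L c) (subseq L y) :=
  filter_ofFn_eq_ofFn_subseq L (by simpa using hL)

lemma rightCars_cars {L : Finset (Fin n)} {o : ℕ} (hL : ∀ i, o < c i ↔ i ∉ L) :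
    rightCars o (cars c y) = cars (subseq Lᶜ fun i => c i - o) (subseq Lᶜ y) := by
  rw [rightCars, cars, filter_ofFn_eq_ofFn_subseq Lᶜ (by simpa using hL), List.map_ofFn]
  rfl

lemma Ico_one_subset_Icc {z M : ℕ} (h : z - 1 ≤ M) : Ico 1 z ⊆ Icc 1 M := fun k hk => by
  simp only [mem_Ico, mem_Icc] at hk ⊢
  omega

lemma IsParkingSeq.parkFold_eq (hc : IsParkingSeq n y z c) :
    parkFold n y z c = some (Icc 1 (z - 1 + ∑ i, y i)) := by
  obtain ⟨occ, hocc⟩ := Option.ne_none_iff_exists'.mp hc.2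
  rw [hocc, eq_Icc_of_foldl_parkStep (forall_mem_cars.mpr hc.1) (Ico_one_subset_Icc le_self_add)
    (by rw [sum_map_snd_cars, Nat.card_Ico]) hocc]

lemma IsParkingSeq.le (hy : ∀ i, 1 ≤ y i) (hc : IsParkingSeq n y z c) (i : Fin n) :
    c i ≤ z - 1 + ∑ i, y i :=
  (mem_Icc.mp (fst_mem_of_foldl_parkStep (forall_mem_cars.mpr hy) hc.parkFold_eq _
    (List.mem_ofFn.mpr ⟨i, rfl⟩))).2

lemma IsParkingSeq.le_of_subseq (hy : ∀ i, 1 ≤ y i) {L : Finset (Fin n)} {c : Fin L.card → ℕ}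
    (hc : IsParkingSeq L.card (subseq L y) z c) (k : Fin L.card) :
    c k ≤ z - 1 + ∑ i ∈ L, y i := by
  simpa only [sum_subseq] using hc.le (y := subseq L y) (fun _ => hy _) k

lemma mem_parkingSeqs (hy : ∀ i, 1 ≤ y i) : c ∈ parkingSeqs n y z ↔ IsParkingSeq n y z c := by
  rw [parkingSeqs, mem_filter, Fintype.mem_piFinset, and_iff_right_iff_imp]
  exact fun hc i => mem_Icc.mpr ⟨hc.1 i, hc.le hy i⟩

lemma mem_parkingSeqs_subseq (hy : ∀ i, 1 ≤ y i) (L : Finset (Fin n)) {c : Fin L.card → ℕ} :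
    c ∈ parkingSeqs L.card (subseq L y) z ↔ IsParkingSeq L.card (subseq L y) z c :=
  mem_parkingSeqs fun _ => hy _

end Cars

section Streets

variable {n : ℕ} {y : Fin n → ℕ} {z : ℕ} {L : Finset (Fin n)} {cL : Fin L.card → ℕ}
  {cR : Fin Lᶜ.card → ℕ} {m o : ℕ}

lemma interleave_le_iff (hcL : ∀ k, cL k ≤ m) (hcR : ∀ k, 1 ≤ cR k) (hmo : m ≤ o) (i : Fin n) :
    interleave L cL (fun k => cR k + o) i ≤ m ↔ i ∈ L := by
  by_cases h : i ∈ L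
  · simp only [h, interleave_of_mem _ _ h, hcL]
  · simp only [h, iff_false, interleave_of_notMem _ _ h, not_le]
    have := hcR ((Lᶜ.orderIsoOfFin rfl).symm ⟨i, mem_compl.mpr h⟩)
    omega

lemma lt_interleave_iff (hcL : ∀ k, cL k ≤ m) (hcR : ∀ k, 1 ≤ cR k) (hmo : m ≤ o) (i : Fin n) :
    o < interleave L cL (fun k => cR k + o) i ↔ i ∉ L := by
  by_cases h : i ∈ L
  · have := hcL ((L.orderIsoOfFin rfl).symm ⟨i, h⟩)
    simp only [h, not_true, iff_false, not_lt, interleave_of_mem _ _ h]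
    omega
  · simp only [h, not_false_iff, iff_true, interleave_of_notMem _ _ h]
    have := hcR ((Lᶜ.orderIsoOfFin rfl).symm ⟨i, mem_compl.mpr h⟩)
    omega


lemma foldl_cars_interleave (hy : ∀ i, 1 ≤ y i) (hL : IsParkingSeq L.card (subseq L y) z cL)
    (hR : IsParkingSeq Lᶜ.card (subseq Lᶜ y) 1 cR) (ho : z - 1 + ∑ i ∈ L, y i ≤ o) :
    (cars (interleave L cL fun k => cR k + o) y).foldl (parkStep (o + ∑ i ∈ Lᶜ, y i))
        (some (Ico 1 z)) =
      some (Icc 1 (z - 1 + ∑ i ∈ L, y i) ∪ Icc (o + 1) (o + ∑ i ∈ Lᶜ, y i)) := by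
  have hleft := interleave_le_iff (hL.le_of_subseq hy) hR.1 ho
  have hright := lt_interleave_iff (hL.le_of_subseq hy) hR.1 ho
  have hcR : (subseq Lᶜ fun i => interleave L cL (fun k => cR k + o) i - o) = cR := by
    funext k
    have := congrFun (subseq_interleave_right cL fun k => cR k + o) k
    simp only [subseq] at this ⊢
    omega
  have hrun := foldl_parkStep_union_image (N := o + ∑ i ∈ Lᶜ, y i)
    (l := cars (interleave L cL fun k => cR k + o) y) (LO := Ico 1 z) (RO := ∅) ho le_self_add
    (forall_mem_cars.mpr fun i => ⟨forall_interleave (p := (1 ≤ ·)) hL.1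
      (fun k => Nat.le_add_right_of_le (hR.1 k)) i, hy i⟩)
    (forall_mem_cars.mpr fun i => (em (i ∈ L)).imp (hleft i).mpr (hright i).mpr)
    (Ico_one_subset_Icc le_self_add) (empty_subset _)
    (by
      rw [leftCars_cars hleft, subseq_interleave_left]
      simpa only [parkFold_eq_foldl_cars, sum_subseq] using hL.parkFold_eq)
    (by
      rw [rightCars_cars hright, hcR, Nat.add_sub_cancel_left]
      simpa only [parkFold_eq_foldl_cars, sum_subseq, Ico_self, Nat.sub_self, zero_add]
        using hR.parkFold_eq)
  rwa [image_empty, union_empty, image_add_right_Icc, Nat.add_comm 1 o, Nat.add_comm _ o] at hrun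

lemma isParkingSeq_subseq_of_hole (hy : ∀ i, 1 ≤ y i) {c : Fin n → ℕ} (hc : ∀ i, 1 ≤ c i)
    {N : ℕ} {U : Finset ℕ} (hmo : m < o) (hoN : o ≤ N) (hzm : z - 1 ≤ m)
    (hvol : z - 1 + ∑ i, y i + o = N + m)
    (hrun : (cars c y).foldl (parkStep N) (some (Ico 1 z)) = some U)
    (hhole : ∀ k, m < k → k ≤ o → k ∉ U) (hL : ∀ i, c i ≤ m ↔ i ∈ L) :
    m = z - 1 + ∑ i ∈ L, y i ∧ (∀ i ∉ L, o < c i) ∧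
      IsParkingSeq L.card (subseq L y) z (subseq L c) ∧
      IsParkingSeq Lᶜ.card (subseq Lᶜ y) 1 (subseq Lᶜ fun i => c i - o) := by
  have hgap : ∀ i, c i ≤ m ∨ o < c i := fun i => by
    by_contra! h
    exact hhole (c i) h.1 h.2 (fst_mem_of_foldl_parkStep (forall_mem_cars.mpr hy) hrun _
      (List.mem_ofFn.mpr ⟨i, rfl⟩))
  have hR : ∀ i, o < c i ↔ i ∉ L := fun i => by
    rw [← hL]
    have := hgap i
    omega
  obtain ⟨LO, RO, hleft, hright⟩ := exists_foldl_leftCars_rightCars (LO := Ico 1 z) (RO := ∅)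
    hmo hoN (forall_mem_cars.mpr fun i => ⟨hc i, hy i⟩)
    (Ico_one_subset_Icc hzm) (empty_subset _) (by rwa [image_empty, union_empty]) hhole
  rw [leftCars_cars hL] at hleft
  rw [rightCars_cars hR] at hright
  have hcR : ∀ k, 1 ≤ subseq Lᶜ (fun i => c i - o) k := fun k => by
    have := (hR _).mpr (mem_compl.mp (Lᶜ.orderIsoOfFin rfl k).2)
    simp only [subseq]
    omega
  have hLcard : LO.card = z - 1 + ∑ i ∈ L, y i := by
    rw [card_of_foldl_parkStep hleft, sum_map_snd_cars, sum_subseq, Nat.card_Ico]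
  have hRcard : RO.card = ∑ i ∈ Lᶜ, y i := by
    rw [card_of_foldl_parkStep hright, sum_map_snd_cars, sum_subseq, card_empty, zero_add]
  have hLle : LO.card ≤ m := by
    simpa using card_le_card (foldl_parkStep_subset_Icc (forall_mem_cars.mpr fun k => hc _)
      (Ico_one_subset_Icc hzm) hleft)
  have hRle : RO.card ≤ N - o := by
    simpa using card_le_card (foldl_parkStep_subset_Icc (forall_mem_cars.mpr hcR)
      (empty_subset _) hright)
  have hsum := sum_add_sum_compl L y
  have hm : m = z - 1 + ∑ i ∈ L, y i := by omega
  refine ⟨hm, fun i hi => (hR i).mpr hi, ⟨fun k => hc _, ?_⟩, ⟨hcR, ?_⟩⟩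
  · rw [parkFold_eq_foldl_cars, sum_subseq, ← hm, hleft]
    exact Option.some_ne_none _
  · rw [parkFold_eq_foldl_cars, sum_subseq, Ico_self, show 1 - 1 + ∑ i ∈ Lᶜ, y i = N - o by omega,
      hright]
    exact Option.some_ne_none _

end Streets

section LastCar

variable {n : ℕ} (y : Fin (n + 1) → ℕ) (z : ℕ)

lemma parkFold_succ (c : Fin (n + 1) → ℕ) :
    parkFold (n + 1) y z c =
      parkStep (z - 1 + ∑ i, y i)
        ((cars (Fin.init c) (Fin.init y)).foldl (parkStep (z - 1 + ∑ i, y i)) (some (Ico 1 z)))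
        (c (Fin.last n), y (Fin.last n)) := by
  rw [parkFold_eq_foldl_cars, cars, List.ofFn_succ', List.concat_eq_append, List.foldl_concat]
  rfl

lemma sum_eq_sum_add_last_add_sum_compl (L : Finset (Fin n)) :
    ∑ i, y i = ∑ i ∈ L, Fin.init y i + y (Fin.last n) + ∑ i ∈ Lᶜ, Fin.init y i := by
  rw [Fin.sum_univ_castSucc, ← sum_add_sum_compl L]
  simp only [Fin.init]
  ring

/-- The last car parks right after the left street `1, …, z - 1 + ∑_{i ∈ L} y_i`, and the right
street begins after it. -/
def glue (L : Finset (Fin n)) (a : ℕ) (cL : Fin L.card → ℕ) (cR : Fin Lᶜ.card → ℕ) :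
    Fin (n + 1) → ℕ :=
  Fin.snoc (α := fun _ => ℕ)
    (interleave L cL fun k => cR k + (z - 1 + ∑ i ∈ L, Fin.init y i + y (Fin.last n))) a

variable {y z} {L : Finset (Fin n)} {cL : Fin L.card → ℕ} {cR : Fin Lᶜ.card → ℕ}

lemma foldl_init_glue (hy : ∀ i, 1 ≤ y i) (a : ℕ)
    (hL : IsParkingSeq L.card (subseq L (Fin.init y)) z cL)
    (hR : IsParkingSeq Lᶜ.card (subseq Lᶜ (Fin.init y)) 1 cR) :
    (cars (Fin.init (glue y z L a cL cR)) (Fin.init y)).foldl (parkStep (z - 1 + ∑ i, y i))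
        (some (Ico 1 z)) =
      some (Icc 1 (z - 1 + ∑ i ∈ L, Fin.init y i) ∪
        Icc (z - 1 + ∑ i ∈ L, Fin.init y i + y (Fin.last n) + 1) (z - 1 + ∑ i, y i)) := by
  rw [glue, Fin.init_snoc, show z - 1 + ∑ i, y i =
    z - 1 + ∑ i ∈ L, Fin.init y i + y (Fin.last n) + ∑ i ∈ Lᶜ, Fin.init y i by
      rw [sum_eq_sum_add_last_add_sum_compl y L]; ring]
  exact foldl_cars_interleave (y := Fin.init y) (fun i => hy _) hL hR le_self_add

lemma isParkingSeq_glue (hy : ∀ i, 1 ≤ y i) (hz : 1 ≤ z) {a : ℕ} (ha : 1 ≤ a)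
    (ham : a ≤ z + ∑ i ∈ L, Fin.init y i)
    (hL : IsParkingSeq L.card (subseq L (Fin.init y)) z cL)
    (hR : IsParkingSeq Lᶜ.card (subseq Lᶜ (Fin.init y)) 1 cR) :
    IsParkingSeq (n + 1) y z (glue y z L a cL cR) := by
  set m := z - 1 + ∑ i ∈ L, Fin.init y i
  have hs := hy (Fin.last n)
  refine ⟨fun i => ?_, ?_⟩
  · induction i using Fin.lastCases with
    | last => simpa [glue] using ha
    | cast i =>
      simp only [glue, Fin.snoc_castSucc]
      exact forall_interleave (p := (1 ≤ ·)) hL.1 (fun k => Nat.le_add_right_of_le (hR.1 k)) i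
  · rw [parkFold_succ, foldl_init_glue hy a hL hR, glue, Fin.snoc_last]
    have hN := sum_eq_sum_add_last_add_sum_compl y L
    have hff := firstFree_Icc_union_Icc (N := z - 1 + ∑ i, y i) ha (show a ≤ m + 1 by omega)
      (show m < m + y (Fin.last n) by omega)
    refine ne_of_eq_of_ne (parkStep_some_eq_some_iff.mpr ⟨⟨?_, fun k hk => ?_⟩, rfl⟩)
      (Option.some_ne_none _)
    · rw [hff]
      omega
    · rw [hff, mem_Ico] at hk
      simp only [mem_union, mem_Icc]
      omega

lemma glue_castSucc_le_iff (hy : ∀ i, 1 ≤ y i) (a : ℕ)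
    (hL : IsParkingSeq L.card (subseq L (Fin.init y)) z cL)
    (hR : IsParkingSeq Lᶜ.card (subseq Lᶜ (Fin.init y)) 1 cR) (i : Fin n) :
    glue y z L a cL cR i.castSucc ≤ z - 1 + ∑ i ∈ L, Fin.init y i ↔ i ∈ L := by
  rw [glue, Fin.snoc_castSucc]
  exact interleave_le_iff (hL.le_of_subseq fun _ => hy _) hR.1 le_self_add i

lemma glue_injective (hy : ∀ i, 1 ≤ y i) {L₁ L₂ : Finset (Fin n)} {a₁ a₂ : ℕ}
    {cL₁ : Fin L₁.card → ℕ} {cR₁ : Fin L₁ᶜ.card → ℕ} {cL₂ : Fin L₂.card → ℕ}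
    {cR₂ : Fin L₂ᶜ.card → ℕ}
    (hL₁ : IsParkingSeq L₁.card (subseq L₁ (Fin.init y)) z cL₁)
    (hR₁ : IsParkingSeq L₁ᶜ.card (subseq L₁ᶜ (Fin.init y)) 1 cR₁)
    (hL₂ : IsParkingSeq L₂.card (subseq L₂ (Fin.init y)) z cL₂)
    (hR₂ : IsParkingSeq L₂ᶜ.card (subseq L₂ᶜ (Fin.init y)) 1 cR₂)
    (h : glue y z L₁ a₁ cL₁ cR₁ = glue y z L₂ a₂ cL₂ cR₂) :
    (⟨L₁, a₁, cL₁, cR₁⟩ : Σ L : Finset (Fin n), ℕ × (Fin L.card → ℕ) × (Fin Lᶜ.card → ℕ)) =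
      ⟨L₂, a₂, cL₂, cR₂⟩ := by
  have hs := hy (Fin.last n)
  have hm : z - 1 + ∑ i ∈ L₁, Fin.init y i = z - 1 + ∑ i ∈ L₂, Fin.init y i := by
    have hU := (foldl_init_glue hy a₁ hL₁ hR₁).symm.trans (h ▸ foldl_init_glue hy a₂ hL₂ hR₂)
    have := congrArg (fun U => firstFree U 1) (Option.some_inj.mp hU)
    rwa [firstFree_Icc_union_Icc le_rfl (by omega) (by omega),
      firstFree_Icc_union_Icc le_rfl (by omega) (by omega), Nat.add_right_cancel_iff] at this
  obtain rfl : L₁ = L₂ := by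
    ext i
    rw [← glue_castSucc_le_iff hy a₁ hL₁ hR₁, ← glue_castSucc_le_iff hy a₂ hL₂ hR₂, h, hm]
  have hinit := congrArg Fin.init h
  rw [glue, glue, Fin.init_snoc, Fin.init_snoc] at hinit
  have hcR : cR₁ = cR₂ := funext fun k => by
    simpa using congrFun (congrArg (subseq L₁ᶜ) hinit) k
  rw [show a₁ = a₂ by simpa [glue] using congrFun h (Fin.last n),
    show cL₁ = cL₂ by simpa using congrArg (subseq L₁) hinit, hcR]

lemma exists_glue_eq (hy : ∀ i, 1 ≤ y i) (hz : 1 ≤ z) {c : Fin (n + 1) → ℕ}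
    (hc : IsParkingSeq (n + 1) y z c) :
    ∃ (L : Finset (Fin n)) (a : ℕ) (cL : Fin L.card → ℕ) (cR : Fin Lᶜ.card → ℕ),
      (1 ≤ a ∧ a ≤ z + ∑ i ∈ L, Fin.init y i) ∧
      IsParkingSeq L.card (subseq L (Fin.init y)) z cL ∧
      IsParkingSeq Lᶜ.card (subseq Lᶜ (Fin.init y)) 1 cR ∧ glue y z L a cL cR = c := by
  set s := y (Fin.last n)
  have hs : 1 ≤ s := hy _
  have hrun := hc.parkFold_eq
  rw [parkFold_succ] at hrun
  obtain ⟨U, hU⟩ : ∃ U, (cars (Fin.init c) (Fin.init y)).foldl (parkStep (z - 1 + ∑ i, y i))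
      (some (Ico 1 z)) = some U :=
    Option.ne_none_iff_exists'.mp fun h => by simp [h, parkStep] at hrun
  rw [hU] at hrun
  obtain ⟨⟨hfit, hdisj⟩, -⟩ := parkStep_some_eq_some_iff.mp hrun
  set j := firstFree U (c (Fin.last n))
  have haj : c (Fin.last n) ≤ j := le_firstFree U _
  have hzj : z ≤ j := by
    by_contra!
    exact firstFree_notMem U _
      (subset_of_foldl_parkStep hU (mem_Ico.mpr ⟨(hc.1 _).trans haj, this⟩))
  have hN : ∑ i, y i = ∑ i, Fin.init y i + s := Fin.sum_univ_castSucc y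
  set L := univ.filter fun i => Fin.init c i ≤ j - 1
  have hhole : ∀ k, j - 1 < k → k ≤ j - 1 + s → k ∉ U := fun k hjk hks =>
    hdisj k (mem_Ico.mpr ⟨by omega, by omega⟩)
  obtain ⟨hm, hright, hPL, hPR⟩ := isParkingSeq_subseq_of_hole (y := Fin.init y)
    (c := Fin.init c) (L := L) (fun i => hy _) (fun i => hc.1 _)
    (show j - 1 < j - 1 + s by omega) (by omega) (by omega) (by omega) hU hhole (by simp [L])
  refine ⟨L, c (Fin.last n), _, _, ⟨hc.1 _, by omega⟩, hPL, hPR, ?_⟩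
  have hinit : (interleave L (subseq L (Fin.init c)) fun k =>
      subseq Lᶜ (fun i => Fin.init c i - (j - 1 + s)) k + (j - 1 + s)) = Fin.init c := by
    conv_rhs => rw [← interleave_subseq (L := L) (Fin.init c)]
    congr 1
    funext k
    have := hright _ (mem_compl.mp (Lᶜ.orderIsoOfFin rfl k).2)
    simp only [subseq]
    omega
  rw [glue, ← hm, hinit, Fin.snoc_init_self]

end LastCar

/-- Recurrence for parking sequences: with cars `1, …, n` indexed by `Fin n` (via
`Fin.castSucc`) and a last car `n+1`, the count satisfies
`f(y₁,…,y_{n+1}; z) = ∑_{L ⊔ R = {1,…,n}} (z + ∑_{l ∈ L} y_l) · f(y_L; z) · f(y_R; 1)`,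
where `y_S` is the subsequence of sizes indexed by `S` in increasing order. -/
theorem numPark_recurrence (n : ℕ) (y : Fin (n + 1) → ℕ) (hy : ∀ i, 1 ≤ y i)
    (z : ℕ) (hz : 1 ≤ z) :
    numPark (n + 1) y z =
      ∑ L : Finset (Fin n),
        (z + ∑ l ∈ L, y l.castSucc) *
          numPark L.card (fun i => y ((L.orderIsoOfFin rfl) i).1.castSucc) z *
          numPark Lᶜ.card (fun i => y (((Lᶜ : Finset (Fin n)).orderIsoOfFin rfl) i).1.castSucc) 1 := by
  have hinit : ∀ i, 1 ≤ Fin.init y i := fun i => hy _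
  symm
  calc _ = ∑ L : Finset (Fin n), #(Icc 1 (z + ∑ i ∈ L, Fin.init y i) ×ˢ
        parkingSeqs L.card (subseq L (Fin.init y)) z ×ˢ
        parkingSeqs Lᶜ.card (subseq Lᶜ (Fin.init y)) 1) := by
        simp only [card_product, Nat.card_Icc, Nat.add_sub_cancel, mul_assoc]
        rfl
    _ = numPark (n + 1) y z := by
      rw [← card_sigma]
      refine card_bij (fun x _ => glue y z x.1 x.2.1 x.2.2.1 x.2.2.2) ?_ ?_ ?_
      · rintro ⟨L, a, cL, cR⟩ hx
        simp only [mem_sigma, mem_product, mem_Icc, mem_parkingSeqs_subseq hinit] at hx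
        exact (mem_parkingSeqs hy).mpr
          (isParkingSeq_glue hy hz hx.2.1.1 hx.2.1.2 hx.2.2.1 hx.2.2.2)
      · rintro ⟨L₁, a₁, cL₁, cR₁⟩ hx₁ ⟨L₂, a₂, cL₂, cR₂⟩ hx₂ h
        simp only [mem_sigma, mem_product, mem_parkingSeqs_subseq hinit] at hx₁ hx₂
        exact glue_injective hy hx₁.2.2.1 hx₁.2.2.2 hx₂.2.2.1 hx₂.2.2.2 h
      · intro c hc
        obtain ⟨L, a, cL, cR, ha, hL, hR, rfl⟩ :=
          exists_glue_eq hy hz ((mem_parkingSeqs hy).mp hc)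
        exact ⟨⟨L, a, cL, cR⟩, by
          simp only [mem_sigma, mem_univ, mem_product, mem_Icc, mem_parkingSeqs_subseq hinit]
          exact ⟨trivial, ha, hL, hR⟩, rfl⟩
end

section
/- Strehl's convolution identity: for a finite set A of positive integers, s_A(x, y; z + w) = ∑_{L ⊔ R = A} s_L(x, y; z) · t_R(x, y; w), where the sum is over ordered pairs of disjoint sets L, R with L ∪ R = A. -/
variable {R : Type*} [CommRing R]

/-- Strehl's polynomial `s_A(x,y;z) = ∏_{a ∈ A} (z + y^A_{≤a} + x^A_{>a})`, where
`y^A_{≤a} = ∑_{j ∈ A, j ≤ a} y_j` and `x^A_{>a} = ∑_{j ∈ A, j > a} x_{a,j}`. -/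
def sPoly (x : ℕ → ℕ → R) (y : ℕ → R) (A : Finset ℕ) (z : R) : R :=
  ∏ a ∈ A,
    (z + ∑ j ∈ A.filter (fun j => j ≤ a), y j + ∑ j ∈ A.filter (fun j => a < j), x a j)

/-- Strehl's polynomial `t_A(x,y;z) = z · ∏_{a ∈ A, a ≠ max A} (z + y^A_{≤a} + x^A_{>a})`,
with `t_∅ = 1`.  (An element `a ∈ A` satisfies `a ≠ max A` iff some `b ∈ A` exceeds it.) -/
def tPoly (x : ℕ → ℕ → R) (y : ℕ → R) (A : Finset ℕ) (z : R) : R :=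
  if A = ∅ then 1
  else
    z * ∏ a ∈ A.filter (fun a => ∃ b ∈ A, a < b),
      (z + ∑ j ∈ A.filter (fun j => j ≤ a), y j + ∑ j ∈ A.filter (fun j => a < j), x a j)

/-- `u_A(z)` is `t_A(z)` without the leading factor `z`, so `t_A = z * u_A` for nonempty `A`. -/
def uPoly (x : ℕ → ℕ → R) (y : ℕ → R) (A : Finset ℕ) (z : R) : R :=
  ∏ a ∈ A.filter (fun a => ∃ b ∈ A, a < b),
    (z + ∑ j ∈ A.filter (fun j => j ≤ a), y j + ∑ j ∈ A.filter (fun j => a < j), x a j)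

namespace Strehl

variable (x : ℕ → ℕ → R) (y : ℕ → R)

lemma tPoly_eq_mul (A : Finset ℕ) (hA : A ≠ ∅) (z : R) :
    tPoly x y A z = z * uPoly x y A z := by
  rw [tPoly, if_neg hA]; rfl

lemma sPoly_empty (z : R) : sPoly x y ∅ z = 1 := by simp [sPoly]

lemma tPoly_empty (z : R) : tPoly x y ∅ z = 1 := by simp [tPoly]

lemma uPoly_empty (z : R) : uPoly x y ∅ z = 1 := by simp [uPoly]

lemma uPoly_singleton (m : ℕ) (z : R) : uPoly x y {m} z = 1 := by
  have : ({m} : Finset ℕ).filter (fun a => ∃ b ∈ ({m} : Finset ℕ), a < b) = ∅ := by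
    ext a; simp; omega
  rw [uPoly, this, Finset.prod_empty]

lemma tPoly_singleton (m : ℕ) (z : R) : tPoly x y {m} z = z := by
  rw [tPoly_eq_mul x y _ (by simp), uPoly_singleton, mul_one]

section recursion

variable {m : ℕ} {B : Finset ℕ} (hm : m ∉ B) (hlt : ∀ b ∈ B, m < b)

include hm hlt

lemma factor_insert {a : ℕ} (ha : a ∈ B) (z : R) :
    (z + ∑ j ∈ (insert m B).filter (fun j => j ≤ a), y j
       + ∑ j ∈ (insert m B).filter (fun j => a < j), x a j)
    = ((z + y m) + ∑ j ∈ B.filter (fun j => j ≤ a), y j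
       + ∑ j ∈ B.filter (fun j => a < j), x a j) := by
  have h1 : (insert m B).filter (fun j => j ≤ a) = insert m (B.filter (fun j => j ≤ a)) := by
    ext j
    simp only [Finset.mem_filter, Finset.mem_insert]
    constructor
    · rintro ⟨h | h, hle⟩
      · exact Or.inl h
      · exact Or.inr ⟨h, hle⟩
    · rintro (rfl | ⟨h, hle⟩)
      · exact ⟨Or.inl rfl, le_of_lt (hlt a ha)⟩
      · exact ⟨Or.inr h, hle⟩
  have h2 : (insert m B).filter (fun j => a < j) = B.filter (fun j => a < j) := by
    ext j
    simp only [Finset.mem_filter, Finset.mem_insert]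
    constructor
    · rintro ⟨h | h, hlt'⟩
      · subst h; exact absurd (lt_trans (hlt a ha) hlt') (lt_irrefl _)
      · exact ⟨h, hlt'⟩
    · rintro ⟨h, hlt'⟩; exact ⟨Or.inr h, hlt'⟩
  have h3 : m ∉ B.filter (fun j => j ≤ a) := fun h => hm (Finset.mem_of_mem_filter _ h)
  rw [h1, h2, Finset.sum_insert h3]
  ring

lemma factor_min (z : R) :
    (z + ∑ j ∈ (insert m B).filter (fun j => j ≤ m), y j
       + ∑ j ∈ (insert m B).filter (fun j => m < j), x m j)
    = z + y m + ∑ j ∈ B, x m j := by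
  have h1 : (insert m B).filter (fun j => j ≤ m) = {m} := by
    ext j
    simp only [Finset.mem_filter, Finset.mem_insert, Finset.mem_singleton]
    constructor
    · rintro ⟨h | h, hle⟩
      · exact h
      · exact absurd (hlt j h) (by omega)
    · rintro rfl; exact ⟨Or.inl rfl, le_refl _⟩
  have h2 : (insert m B).filter (fun j => m < j) = B := by
    ext j
    simp only [Finset.mem_filter, Finset.mem_insert]
    constructor
    · rintro ⟨h | h, hlt'⟩
      · omega
      · exact h
    · exact fun h => ⟨Or.inr h, hlt j h⟩
  rw [h1, h2, Finset.sum_singleton]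

lemma sPoly_insert (z : R) :
    sPoly x y (insert m B) z
      = (z + y m + ∑ j ∈ B, x m j) * sPoly x y B (z + y m) := by
  rw [sPoly, Finset.prod_insert hm, factor_min x y hm hlt, sPoly]
  congr 1
  exact Finset.prod_congr rfl fun a ha => factor_insert x y hm hlt ha z

lemma uPoly_insert (hB : B ≠ ∅) (z : R) :
    uPoly x y (insert m B) z
      = (z + y m + ∑ j ∈ B, x m j) * uPoly x y B (z + y m) := by
  obtain ⟨b0, hb0⟩ := Finset.nonempty_iff_ne_empty.2 hB
  have hfil : (insert m B).filter (fun a => ∃ b ∈ insert m B, a < b)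
      = insert m (B.filter (fun a => ∃ b ∈ B, a < b)) := by
    ext a
    simp only [Finset.mem_filter, Finset.mem_insert]
    constructor
    · rintro ⟨h | h, b, hb | hb, hab⟩
      · exact Or.inl h
      · exact Or.inl h
      · subst hb; exact absurd (lt_trans (hlt a h) hab) (lt_irrefl _)
      · exact Or.inr ⟨h, b, hb, hab⟩
    · rintro (rfl | ⟨h, b, hb, hab⟩)
      · exact ⟨Or.inl rfl, b0, Or.inr hb0, hlt b0 hb0⟩
      · exact ⟨Or.inr h, b, Or.inr hb, hab⟩
  have hmf : m ∉ B.filter (fun a => ∃ b ∈ B, a < b) :=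
    fun h => hm (Finset.mem_of_mem_filter _ h)
  rw [uPoly, hfil, Finset.prod_insert hmf, factor_min x y hm hlt, uPoly]
  congr 1
  exact Finset.prod_congr rfl fun a ha => by
    have haB : a ∈ B := Finset.mem_of_mem_filter _ ha
    exact factor_insert x y hm hlt haB z

lemma tPoly_insert (hB : B ≠ ∅) (z : R) :
    tPoly x y (insert m B) z
      = z * ((z + y m + ∑ j ∈ B, x m j) * uPoly x y B (z + y m)) := by
  rw [tPoly_eq_mul x y _ (by simp [Finset.insert_ne_empty]), uPoly_insert x y hm hlt hB]

end recursion



variable {M : Type*} [AddCommMonoid M]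

/-- Reindex a sum over subsets by complementation. -/
lemma sum_powerset_compl (A : Finset ℕ) (f : Finset ℕ → Finset ℕ → M) :
    ∑ Q ∈ A.powerset, f Q (A \ Q) = ∑ Q ∈ A.powerset, f (A \ Q) Q := by
  apply Finset.sum_nbij' (fun Q => A \ Q) (fun Q => A \ Q)
  · intro Q hQ; exact Finset.mem_powerset.2 (Finset.sdiff_subset)
  · intro Q hQ; exact Finset.mem_powerset.2 (Finset.sdiff_subset)
  · intro Q hQ
    rw [Finset.sdiff_sdiff_self_left, Finset.inter_eq_right.2 (Finset.mem_powerset.1 hQ)]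
  · intro Q hQ
    rw [Finset.sdiff_sdiff_self_left, Finset.inter_eq_right.2 (Finset.mem_powerset.1 hQ)]
  · intro Q hQ
    rw [Finset.sdiff_sdiff_self_left, Finset.inter_eq_right.2 (Finset.mem_powerset.1 hQ)]

/-- Fubini for sums over pairs (Q, P) with P ⊆ Q ⊆ S, reindexed as triple partitions. -/
lemma sum_powerset_triple (S : Finset ℕ) (f : Finset ℕ → Finset ℕ → Finset ℕ → M) :
    ∑ Q ∈ S.powerset, ∑ P ∈ Q.powerset, f P (Q \ P) (S \ Q)
      = ∑ P ∈ S.powerset, ∑ B ∈ (S \ P).powerset, f P B ((S \ P) \ B) := by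
  rw [Finset.sum_sigma' S.powerset (fun Q => Q.powerset)
        (fun Q P => f P (Q \ P) (S \ Q)),
      Finset.sum_sigma' S.powerset (fun P => (S \ P).powerset)
        (fun P B => f P B ((S \ P) \ B))]
  apply Finset.sum_nbij' (fun p => (⟨p.2, p.1 \ p.2⟩ : (_ : Finset ℕ) × Finset ℕ))
    (fun q => (⟨q.1 ∪ q.2, q.1⟩ : (_ : Finset ℕ) × Finset ℕ))
  · rintro ⟨Q, P⟩ hp
    simp only [Finset.mem_sigma, Finset.mem_powerset] at hp ⊢
    exact ⟨hp.2.trans hp.1, Finset.sdiff_subset_sdiff hp.1 (le_refl _)⟩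
  · rintro ⟨P, B⟩ hq
    simp only [Finset.mem_sigma, Finset.mem_powerset] at hq ⊢
    constructor
    · exact Finset.union_subset hq.1 (hq.2.trans Finset.sdiff_subset)
    · exact Finset.subset_union_left
  · rintro ⟨Q, P⟩ hp
    simp only [Finset.mem_sigma, Finset.mem_powerset] at hp
    rw [Finset.union_sdiff_of_subset hp.2]
  · rintro ⟨P, B⟩ hq
    simp only [Finset.mem_sigma, Finset.mem_powerset] at hq
    have hdisj : Disjoint P B := Finset.disjoint_of_subset_right hq.2 Finset.disjoint_sdiff
    rw [Finset.union_sdiff_cancel_left hdisj]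
  · rintro ⟨Q, P⟩ hp
    simp only [Finset.mem_sigma, Finset.mem_powerset] at hp
    have h1 : (S \ P) \ (Q \ P) = S \ Q := by
      ext a
      simp only [Finset.mem_sdiff, not_and, not_not]
      constructor
      · rintro ⟨⟨haS, haP⟩, h⟩
        exact ⟨haS, fun haQ => haP (h haQ)⟩
      · rintro ⟨haS, haQ⟩
        exact ⟨⟨haS, fun haP => haQ (hp.2 haP)⟩, fun h => absurd h haQ⟩
    rw [h1]

/-- Exchange the roles of the first two parts in a triple-partition sum. -/
lemma sum_powerset_swap (S : Finset ℕ) (f : Finset ℕ → Finset ℕ → Finset ℕ → M) :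
    ∑ B ∈ S.powerset, ∑ P ∈ (S \ B).powerset, f P B ((S \ B) \ P)
      = ∑ P ∈ S.powerset, ∑ B ∈ (S \ P).powerset, f P B ((S \ P) \ B) := by
  rw [Finset.sum_sigma' S.powerset (fun B => (S \ B).powerset)
        (fun B P => f P B ((S \ B) \ P)),
      Finset.sum_sigma' S.powerset (fun P => (S \ P).powerset)
        (fun P B => f P B ((S \ P) \ B))]
  apply Finset.sum_nbij' (fun p => (⟨p.2, p.1⟩ : (_ : Finset ℕ) × Finset ℕ))
    (fun q => (⟨q.2, q.1⟩ : (_ : Finset ℕ) × Finset ℕ))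
  · rintro ⟨B, P⟩ hp
    simp only [Finset.mem_sigma, Finset.mem_powerset] at hp ⊢
    refine ⟨hp.2.trans Finset.sdiff_subset, ?_⟩
    intro b hb
    have hbS : b ∈ S := hp.1 hb
    refine Finset.mem_sdiff.2 ⟨hbS, fun hbP => ?_⟩
    exact (Finset.mem_sdiff.1 (hp.2 hbP)).2 hb
  · rintro ⟨P, B⟩ hq
    simp only [Finset.mem_sigma, Finset.mem_powerset] at hq ⊢
    refine ⟨hq.2.trans Finset.sdiff_subset, ?_⟩
    intro b hb
    have hbS : b ∈ S := hq.1 hb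
    refine Finset.mem_sdiff.2 ⟨hbS, fun hbP => ?_⟩
    exact (Finset.mem_sdiff.1 (hq.2 hbP)).2 hb
  · rintro ⟨B, P⟩ _; rfl
  · rintro ⟨P, B⟩ _; rfl
  · rintro ⟨B, P⟩ hp
    have : (S \ B) \ P = (S \ P) \ B := by
      exact sdiff_sdiff_comm
    rw [this]

/-- Sum over elements of a subset T ⊆ A written as an indicator sum over A. -/
lemma sum_sdiff_ite (A T : Finset ℕ) (hT : T ⊆ A) (g : ℕ → M) :
    ∑ κ ∈ T, g κ = ∑ κ ∈ A, (if κ ∈ T then g κ else 0) := by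
  rw [Finset.sum_ite_mem, Finset.inter_eq_right.2 hT]

/-- The marked convolution statement for `t`. -/
def ClubEq (R : Type*) [CommRing R] (x : ℕ → ℕ → R) (y : ℕ → R) (A : Finset ℕ) : Prop :=
  ∀ j ∈ A, ∀ z w : R,
    ∑ Q ∈ A.powerset, (if j ∈ Q then tPoly x y Q z * tPoly x y (A \ Q) w else 0)
      = z * uPoly x y A (z + w)

/-- The main convolution statement for `s`. -/
def SEq (R : Type*) [CommRing R] (x : ℕ → ℕ → R) (y : ℕ → R) (A : Finset ℕ) : Prop :=
  ∀ z w : R,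
    sPoly x y A (z + w) = ∑ L ∈ A.powerset, sPoly x y L z * tPoly x y (A \ L) w

section maps

variable {S : Type*} [CommRing S] (φ : R →+* S) (x : ℕ → ℕ → R) (y : ℕ → R)

lemma map_sPoly (A : Finset ℕ) (z : R) :
    φ (sPoly x y A z)
      = sPoly (fun i j => φ (x i j)) (fun j => φ (y j)) A (φ z) := by
  rw [sPoly, map_prod, sPoly]
  exact Finset.prod_congr rfl fun a _ => by rw [map_add, map_add, map_sum, map_sum]

lemma map_uPoly (A : Finset ℕ) (z : R) :
    φ (uPoly x y A z)
      = uPoly (fun i j => φ (x i j)) (fun j => φ (y j)) A (φ z) := by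
  rw [uPoly, map_prod, uPoly]
  exact Finset.prod_congr rfl fun a _ => by rw [map_add, map_add, map_sum, map_sum]

lemma map_tPoly (A : Finset ℕ) (z : R) :
    φ (tPoly x y A z)
      = tPoly (fun i j => φ (x i j)) (fun j => φ (y j)) A (φ z) := by
  by_cases hA : A = ∅
  · subst hA; simp [tPoly]
  · rw [tPoly_eq_mul x y A hA, tPoly_eq_mul _ _ A hA, map_mul, map_uPoly]

end maps

section derived

variable {x : ℕ → ℕ → R} {y : ℕ → R} {A : Finset ℕ}

lemma club_swap (hclub : ClubEq R x y A) {j : ℕ} (hj : j ∈ A) (z w : R) :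
    ∑ Q ∈ A.powerset, (if j ∈ A \ Q then tPoly x y Q z * tPoly x y (A \ Q) w else 0)
      = w * uPoly x y A (z + w) := by
  have h := sum_powerset_compl A
    (fun Q C => if j ∈ C then tPoly x y Q z * tPoly x y C w else 0)
  rw [h]
  have h2 : ∀ Q ∈ A.powerset,
      (if j ∈ Q then tPoly x y (A \ Q) z * tPoly x y Q w else 0)
      = (if j ∈ Q then tPoly x y Q w * tPoly x y (A \ Q) z else 0) := by
    intro Q _; split_ifs with h' <;> ring
  rw [Finset.sum_congr rfl h2, hclub j hj w z, add_comm w z]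

lemma TT (hclub : ClubEq R x y A) (z w : R) :
    ∑ Q ∈ A.powerset, tPoly x y Q z * tPoly x y (A \ Q) w = tPoly x y A (z + w) := by
  rcases Finset.eq_empty_or_nonempty A with rfl | ⟨j, hj⟩
  · simp [tPoly]
  · have key : ∀ Q ∈ A.powerset,
        tPoly x y Q z * tPoly x y (A \ Q) w
        = (if j ∈ Q then tPoly x y Q z * tPoly x y (A \ Q) w else 0)
          + (if j ∈ A \ Q then tPoly x y Q z * tPoly x y (A \ Q) w else 0) := by
      intro Q hQ
      by_cases h : j ∈ Q
      · rw [if_pos h, if_neg (fun hc => (Finset.mem_sdiff.1 hc).2 h), add_zero]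
      · rw [if_neg h, if_pos (Finset.mem_sdiff.2 ⟨hj, h⟩), zero_add]
    rw [Finset.sum_congr rfl key, Finset.sum_add_distrib, hclub j hj z w,
        club_swap hclub hj z w,
        tPoly_eq_mul x y A (Finset.nonempty_iff_ne_empty.1 ⟨j, hj⟩) (z + w)]
    ring

end derived


section CL

variable {A : Finset ℕ}

private abbrev RR := MvPolynomial (ℕ ⊕ ((ℕ × ℕ) ⊕ ℕ)) ℤ

private noncomputable def Xg : ℕ → ℕ → RR := fun i j => MvPolynomial.X (Sum.inr (Sum.inl (i, j)))
private noncomputable def Yg : ℕ → RR := fun j => MvPolynomial.X (Sum.inl j)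
private noncomputable def ag : RR := MvPolynomial.X (Sum.inr (Sum.inr 0))
private noncomputable def bg : RR := MvPolynomial.X (Sum.inr (Sum.inr 1))

lemma CL (hclub : ∀ (R₀ : Type) [CommRing R₀] (x₀ : ℕ → ℕ → R₀) (y₀ : ℕ → R₀),
      ClubEq R₀ x₀ y₀ A)
    {κ : ℕ} (hκ : κ ∈ A) (x : ℕ → ℕ → R) (y : ℕ → R) (a b : R) :
    ∑ Q ∈ A.powerset, (if κ ∈ A \ Q then tPoly x y Q a * uPoly x y (A \ Q) b else 0)
      = uPoly x y A (a + b) := by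
  have gen : ∑ Q ∈ A.powerset,
      (if κ ∈ A \ Q then tPoly Xg Yg Q ag * uPoly Xg Yg (A \ Q) bg else 0)
      = uPoly Xg Yg A (ag + bg) := by
    have hb0 : (bg : RR) ≠ 0 := MvPolynomial.X_ne_zero _
    apply mul_left_cancel₀ hb0
    have hsw := club_swap (hclub RR Xg Yg) hκ ag bg
    calc bg * ∑ Q ∈ A.powerset,
          (if κ ∈ A \ Q then tPoly Xg Yg Q ag * uPoly Xg Yg (A \ Q) bg else 0)
        = ∑ Q ∈ A.powerset,
          (if κ ∈ A \ Q then tPoly Xg Yg Q ag * tPoly Xg Yg (A \ Q) bg else 0) := by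
          rw [Finset.mul_sum]
          refine Finset.sum_congr rfl fun Q _ => ?_
          by_cases h : κ ∈ A \ Q
          · rw [if_pos h, if_pos h,
              tPoly_eq_mul Xg Yg (A \ Q) (Finset.ne_empty_of_mem h) bg]
            ring
          · rw [if_neg h, if_neg h, mul_zero]
      _ = bg * uPoly Xg Yg A (ag + bg) := hsw
  classical
  let g : (ℕ ⊕ ((ℕ × ℕ) ⊕ ℕ)) → R := fun s =>
    match s with
    | Sum.inl j => y j
    | Sum.inr (Sum.inl (i, j)) => x i j
    | Sum.inr (Sum.inr 0) => a
    | Sum.inr (Sum.inr (_ + 1)) => b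
  let φ : RR →+* R := (MvPolynomial.aeval g).toRingHom
  have hfx : (fun i j => φ (Xg i j)) = x := by
    funext i j; simp [φ, Xg, g]
  have hfy : (fun j => φ (Yg j)) = y := by
    funext j; simp [φ, Yg, g]
  have ha : φ ag = a := by simp [φ, ag, g]
  have hb : φ bg = b := by simp [φ, bg, g]
  have h := congrArg φ gen
  rw [map_sum] at h
  simp only [apply_ite φ, map_zero, map_mul, map_add, map_tPoly, map_uPoly,
    hfx, hfy, ha, hb] at h
  exact h

end CL

section DIA

variable {x : ℕ → ℕ → R} {y : ℕ → R}

lemma DIA {S : Finset ℕ} (hclub : ClubEq R x y S) {m : ℕ} (hm : m ∉ S)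
    (hlt : ∀ s ∈ S, m < s) (w : R) :
    tPoly x y (insert m S) w
      = ∑ Q ∈ S.powerset,
          tPoly x y Q (y m) * ((w + ∑ κ ∈ S \ Q, x m κ) * tPoly x y (S \ Q) w) := by
  rcases Finset.eq_empty_or_nonempty S with rfl | hS
  · simp [tPoly_singleton, tPoly_empty]
  · have hSne : S ≠ ∅ := Finset.nonempty_iff_ne_empty.1 hS
    have expand : ∀ Q ∈ S.powerset,
        tPoly x y Q (y m) * ((w + ∑ κ ∈ S \ Q, x m κ) * tPoly x y (S \ Q) w)
        = w * (tPoly x y Q (y m) * tPoly x y (S \ Q) w)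
          + ∑ κ ∈ S, (if κ ∈ S \ Q then
              x m κ * (tPoly x y Q (y m) * tPoly x y (S \ Q) w) else 0) := by
      intro Q hQ
      rw [sum_sdiff_ite S (S \ Q) Finset.sdiff_subset (fun κ => x m κ)]
      have h1 : ∀ κ ∈ S,
          (if κ ∈ S \ Q then x m κ else 0) * (tPoly x y Q (y m) * tPoly x y (S \ Q) w)
          = (if κ ∈ S \ Q then x m κ * (tPoly x y Q (y m) * tPoly x y (S \ Q) w) else 0) := by
        intro κ _; split_ifs <;> simp
      calc tPoly x y Q (y m) * ((w + ∑ κ ∈ S, if κ ∈ S \ Q then x m κ else 0)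
              * tPoly x y (S \ Q) w)
          = w * (tPoly x y Q (y m) * tPoly x y (S \ Q) w)
            + (∑ κ ∈ S, if κ ∈ S \ Q then x m κ else 0)
              * (tPoly x y Q (y m) * tPoly x y (S \ Q) w) := by ring
        _ = _ := by rw [Finset.sum_mul, Finset.sum_congr rfl h1]
    rw [Finset.sum_congr rfl expand, Finset.sum_add_distrib, ← Finset.mul_sum,
      TT hclub (y m) w, Finset.sum_comm]
    have inner : ∀ κ ∈ S,
        ∑ Q ∈ S.powerset, (if κ ∈ S \ Q then
            x m κ * (tPoly x y Q (y m) * tPoly x y (S \ Q) w) else 0)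
        = x m κ * (w * uPoly x y S (y m + w)) := by
      intro κ hκ
      have h2 : ∀ Q ∈ S.powerset,
          (if κ ∈ S \ Q then x m κ * (tPoly x y Q (y m) * tPoly x y (S \ Q) w) else 0)
          = x m κ * (if κ ∈ S \ Q then tPoly x y Q (y m) * tPoly x y (S \ Q) w else 0) := by
        intro Q _; split_ifs <;> simp
      rw [Finset.sum_congr rfl h2, ← Finset.mul_sum, club_swap hclub hκ (y m) w]
    rw [Finset.sum_congr rfl inner, ← Finset.sum_mul, tPoly_insert x y hm hlt hSne w,
      tPoly_eq_mul x y S hSne, add_comm w (y m)]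
    ring
end DIA

section steps

variable {x : ℕ → ℕ → R} {y : ℕ → R}

lemma insert_sdiff_of_subset {m : ℕ} {A' L : Finset ℕ} (hm : m ∉ A') (hL : L ⊆ A') :
    insert m A' \ L = insert m (A' \ L) := by
  ext a
  simp only [Finset.mem_sdiff, Finset.mem_insert]
  constructor
  · rintro ⟨rfl | h, hnL⟩
    · exact Or.inl rfl
    · exact Or.inr ⟨h, hnL⟩
  · rintro (rfl | h)
    · exact ⟨Or.inl rfl, fun hc => hm (hL hc)⟩
    · exact ⟨Or.inr h.1, h.2⟩

lemma insert_sdiff_insert' {m : ℕ} {A' L : Finset ℕ} (hm : m ∉ A') :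
    insert m A' \ insert m L = A' \ L := by
  ext a
  simp only [Finset.mem_sdiff, Finset.mem_insert]
  constructor
  · rintro ⟨rfl | h, hn⟩
    · exact absurd (Or.inl rfl) hn
    · exact ⟨h, fun hc => hn (Or.inr hc)⟩
  · rintro ⟨h1, h2⟩
    refine ⟨Or.inr h1, ?_⟩
    rintro (rfl | hc)
    · exact hm h1
    · exact h2 hc

lemma s_step {A : Finset ℕ} (hA : A.Nonempty)
    (hS' : ∀ L ⊆ A.erase (A.min' hA), SEq R x y L)
    (hclub' : ∀ T ⊆ A.erase (A.min' hA), ClubEq R x y T) :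
    SEq R x y A := by
  intro z w
  set m := A.min' hA with hm_def
  set A' := A.erase m with hA'_def
  have hmA : m ∈ A := A.min'_mem hA
  have hmA' : m ∉ A' := Finset.notMem_erase m A
  have hins : insert m A' = A := Finset.insert_erase hmA
  have hlt : ∀ b ∈ A', m < b := fun b hb =>
    lt_of_le_of_ne (A.min'_le b (Finset.mem_of_mem_erase hb))
      (Ne.symm (Finset.ne_of_mem_erase hb))
  -- LHS
  rw [← hins, sPoly_insert x y hmA' hlt (z + w)]
  have harg : z + w + y m = (z + y m) + w := by ring
  rw [harg, hS' A' (le_refl _) (z + y m) w]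
  -- RHS
  rw [Finset.sum_powerset_insert hmA']
  -- rewrite sdiffs in RHS
  have hrw1 : ∀ L ∈ A'.powerset,
      sPoly x y L z * tPoly x y (insert m A' \ L) w
      = sPoly x y L z * tPoly x y (insert m (A' \ L)) w := by
    intro L hL
    rw [insert_sdiff_of_subset hmA' (Finset.mem_powerset.1 hL)]
  have hrw2 : ∀ L ∈ A'.powerset,
      sPoly x y (insert m L) z * tPoly x y (insert m A' \ insert m L) w
      = ((z + y m + ∑ j ∈ L, x m j) * sPoly x y L (z + y m)) * tPoly x y (A' \ L) w := by
    intro L hL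
    have hLsub := Finset.mem_powerset.1 hL
    have hmL : m ∉ L := fun hc => hmA' (hLsub hc)
    have hltL : ∀ b ∈ L, m < b := fun b hb => hlt b (hLsub hb)
    rw [insert_sdiff_insert' hmA', sPoly_insert x y hmL hltL z]
  rw [Finset.sum_congr rfl hrw1, Finset.sum_congr rfl hrw2]
  -- expand LHS product over the sum
  rw [Finset.mul_sum]
  have split : ∀ L ∈ A'.powerset,
      (z + y m + w + ∑ j ∈ A', x m j) * (sPoly x y L (z + y m) * tPoly x y (A' \ L) w)
      = ((z + y m + ∑ j ∈ L, x m j) * sPoly x y L (z + y m)) * tPoly x y (A' \ L) w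
        + (w + ∑ j ∈ A' \ L, x m j) * sPoly x y L (z + y m) * tPoly x y (A' \ L) w := by
    intro L hL
    have hsum : (∑ j ∈ A' \ L, x m j) + (∑ j ∈ L, x m j) = ∑ j ∈ A', x m j :=
      Finset.sum_sdiff (Finset.mem_powerset.1 hL)
    rw [← hsum]; ring
  rw [Finset.sum_congr rfl split, Finset.sum_add_distrib, add_comm]
  congr 1
  · -- second parts sum equals Σ_L s_L(z) * t_{insert m (A'∖L)}(w)
    have expand_s : ∀ L ∈ A'.powerset,
        (w + ∑ j ∈ A' \ L, x m j) * sPoly x y L (z + y m) * tPoly x y (A' \ L) w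
        = ∑ P ∈ L.powerset,
            sPoly x y P z * (tPoly x y (L \ P) (y m)
              * ((w + ∑ j ∈ A' \ L, x m j) * tPoly x y (A' \ L) w)) := by
      intro L hL
      rw [hS' L (Finset.mem_powerset.1 hL) z (y m), Finset.mul_sum, Finset.sum_mul]
      exact Finset.sum_congr rfl fun P _ => by ring
    rw [Finset.sum_congr rfl expand_s]
    rw [sum_powerset_triple A' (fun P B C =>
      sPoly x y P z * (tPoly x y B (y m) * ((w + ∑ j ∈ C, x m j) * tPoly x y C w)))]
    refine Finset.sum_congr rfl fun P hP => ?_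
    rw [← Finset.mul_sum,
      ← DIA (hclub' (A' \ P) Finset.sdiff_subset)
        (fun hc => hmA' (Finset.mem_sdiff.1 hc).1)
        (fun s hs => hlt s (Finset.mem_sdiff.1 hs).1) w]

end steps

section clubstep

variable {x : ℕ → ℕ → R} {y : ℕ → R}

lemma marked_inner {T : Finset ℕ} (hclubT : ClubEq R x y T) (κ : ℕ) (z w : R) :
    ∑ B ∈ T.powerset, (if κ ∈ B then tPoly x y B z * tPoly x y (T \ B) w else 0)
      = if κ ∈ T then z * uPoly x y T (z + w) else 0 := by
  by_cases h : κ ∈ T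
  · rw [if_pos h]; exact hclubT κ h z w
  · rw [if_neg h]
    exact Finset.sum_eq_zero fun B hB =>
      if_neg (fun hc => h (Finset.mem_powerset.1 hB hc))

lemma club_step {A : Finset ℕ} (hA : A.Nonempty)
    (hclub' : ∀ T ⊆ A.erase (A.min' hA), ClubEq R x y T)
    (hCL : ∀ κ ∈ A.erase (A.min' hA), ∀ a b : R,
        ∑ Q ∈ (A.erase (A.min' hA)).powerset,
          (if κ ∈ A.erase (A.min' hA) \ Q then
            tPoly x y Q a * uPoly x y (A.erase (A.min' hA) \ Q) b else 0)
        = uPoly x y (A.erase (A.min' hA)) (a + b)) :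
    ClubEq R x y A := by
  intro j hj z w
  set m := A.min' hA with hm_def
  set A' := A.erase m with hA'_def
  have hmA : m ∈ A := A.min'_mem hA
  have hmA' : m ∉ A' := Finset.notMem_erase m A
  have hins : insert m A' = A := Finset.insert_erase hmA
  have hlt : ∀ b ∈ A', m < b := fun b hb =>
    lt_of_le_of_ne (A.min'_le b (Finset.mem_of_mem_erase hb))
      (Ne.symm (Finset.ne_of_mem_erase hb))
  rcases Finset.eq_empty_or_nonempty A' with hA'e | hA'ne
  · -- A = {m}
    have hAm : A = {m} := by rw [← hins, hA'e]; rfl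
    have hjm : j = m := by rw [hAm] at hj; exact Finset.mem_singleton.1 hj
    subst hjm
    rw [hAm]
    have hsing : ({m} : Finset ℕ) = insert m ∅ := rfl
    rw [hsing, Finset.sum_powerset_insert (Finset.notMem_empty m)]
    simp [Finset.powerset_empty, tPoly_singleton, uPoly_singleton, tPoly_empty,
      Finset.sdiff_self]
  · have hA'ne' : A' ≠ ∅ := Finset.nonempty_iff_ne_empty.1 hA'ne
    have hu : uPoly x y A (z + w)
        = ((z + w) + y m + ∑ i ∈ A', x m i) * uPoly x y A' (y m + (z + w)) := by
      rw [← hins, uPoly_insert x y hmA' hlt hA'ne' (z + w), add_comm (z + w) (y m)]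
    rw [hu, ← hins, Finset.sum_powerset_insert hmA']
    by_cases hjm : j = m
    · -- case j = m
      subst hjm
      -- now j is replaced by m
      have p1 : ∑ Q ∈ A'.powerset,
          (if m ∈ Q then tPoly x y Q z * tPoly x y (insert m A' \ Q) w else 0) = 0 :=
        Finset.sum_eq_zero fun Q hQ =>
          if_neg (fun hc => hmA' (Finset.mem_powerset.1 hQ hc))
      rw [p1, zero_add]
      have step2 : ∀ Q' ∈ A'.powerset,
          (if m ∈ insert m Q' then
            tPoly x y (insert m Q') z * tPoly x y (insert m A' \ insert m Q') w else 0)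
          = ∑ P ∈ Q'.powerset,
              tPoly x y P (y m) * ((z + ∑ κ ∈ Q' \ P, x m κ) * tPoly x y (Q' \ P) z)
                * tPoly x y (A' \ Q') w := by
        intro Q' hQ'
        have hsub := Finset.mem_powerset.1 hQ'
        have hmQ' : m ∉ Q' := fun hc => hmA' (hsub hc)
        have hltQ' : ∀ s ∈ Q', m < s := fun s hs => hlt s (hsub hs)
        rw [if_pos (Finset.mem_insert_self m Q'), insert_sdiff_insert' hmA',
          DIA (hclub' Q' hsub) hmQ' hltQ' z, Finset.sum_mul]
      rw [Finset.sum_congr rfl step2,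
        sum_powerset_triple A' (fun P B C =>
          tPoly x y P (y m) * ((z + ∑ κ ∈ B, x m κ) * tPoly x y B z) * tPoly x y C w)]
      -- split coefficient z + X_B
      have split : ∀ P ∈ A'.powerset, ∀ B ∈ (A' \ P).powerset,
          tPoly x y P (y m) * ((z + ∑ κ ∈ B, x m κ) * tPoly x y B z)
            * tPoly x y ((A' \ P) \ B) w
          = z * (tPoly x y P (y m) * (tPoly x y B z * tPoly x y ((A' \ P) \ B) w))
            + ∑ κ ∈ A', (if κ ∈ B then
                x m κ * (tPoly x y P (y m)
                  * (tPoly x y B z * tPoly x y ((A' \ P) \ B) w)) else 0) := by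
        intro P hP B hB
        have hBsub : B ⊆ A' := (Finset.mem_powerset.1 hB).trans Finset.sdiff_subset
        rw [sum_sdiff_ite A' B hBsub (fun κ => x m κ)]
        have h1 : ∀ κ ∈ A',
            (if κ ∈ B then x m κ else 0)
              * (tPoly x y P (y m) * (tPoly x y B z * tPoly x y ((A' \ P) \ B) w))
            = (if κ ∈ B then x m κ * (tPoly x y P (y m)
                * (tPoly x y B z * tPoly x y ((A' \ P) \ B) w)) else 0) := by
          intro κ _; split_ifs <;> simp
        rw [← Finset.sum_congr rfl h1, ← Finset.sum_mul]
        ring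
      have sum_split :
          ∑ P ∈ A'.powerset, ∑ B ∈ (A' \ P).powerset,
            (tPoly x y P (y m) * ((z + ∑ κ ∈ B, x m κ) * tPoly x y B z)
              * tPoly x y ((A' \ P) \ B) w)
          = (∑ P ∈ A'.powerset, ∑ B ∈ (A' \ P).powerset,
              z * (tPoly x y P (y m) * (tPoly x y B z * tPoly x y ((A' \ P) \ B) w)))
            + ∑ P ∈ A'.powerset, ∑ B ∈ (A' \ P).powerset, ∑ κ ∈ A',
                (if κ ∈ B then x m κ * (tPoly x y P (y m)
                  * (tPoly x y B z * tPoly x y ((A' \ P) \ B) w)) else 0) := by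
        rw [← Finset.sum_add_distrib]
        refine Finset.sum_congr rfl fun P hP => ?_
        rw [← Finset.sum_add_distrib]
        exact Finset.sum_congr rfl fun B hB => split P hP B hB
      rw [sum_split]
      -- first sum: z * t_{A'}(ym + (z+w))
      have first : ∑ P ∈ A'.powerset, ∑ B ∈ (A' \ P).powerset,
          z * (tPoly x y P (y m) * (tPoly x y B z * tPoly x y ((A' \ P) \ B) w))
          = z * ((y m + (z + w)) * uPoly x y A' (y m + (z + w))) := by
        have h1 : ∀ P ∈ A'.powerset,
            ∑ B ∈ (A' \ P).powerset,
              z * (tPoly x y P (y m) * (tPoly x y B z * tPoly x y ((A' \ P) \ B) w))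
            = z * (tPoly x y P (y m) * tPoly x y (A' \ P) (z + w)) := by
          intro P hP
          rw [← TT (hclub' (A' \ P) Finset.sdiff_subset) z w, Finset.mul_sum, Finset.mul_sum]
        rw [Finset.sum_congr rfl h1, ← Finset.mul_sum, TT (hclub' A' (Finset.Subset.refl _)),
          tPoly_eq_mul x y A' hA'ne']
      -- second sum: z * H * u_{A'}(ym + (z+w))
      have second : ∑ P ∈ A'.powerset, ∑ B ∈ (A' \ P).powerset, ∑ κ ∈ A',
          (if κ ∈ B then x m κ * (tPoly x y P (y m)
            * (tPoly x y B z * tPoly x y ((A' \ P) \ B) w)) else 0)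
          = (∑ κ ∈ A', x m κ) * (z * uPoly x y A' (y m + (z + w))) := by
        have h1 : ∀ P ∈ A'.powerset,
            ∑ B ∈ (A' \ P).powerset, ∑ κ ∈ A',
              (if κ ∈ B then x m κ * (tPoly x y P (y m)
                * (tPoly x y B z * tPoly x y ((A' \ P) \ B) w)) else 0)
            = ∑ κ ∈ A', (x m κ * tPoly x y P (y m)) * (if κ ∈ A' \ P then
                z * uPoly x y (A' \ P) (z + w) else 0) := by
          intro P hP
          rw [Finset.sum_comm]
          refine Finset.sum_congr rfl fun κ _ => ?_
          rw [← marked_inner (hclub' (A' \ P) Finset.sdiff_subset) κ z w, Finset.mul_sum]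
          refine Finset.sum_congr rfl fun B hB => ?_
          split_ifs <;> ring
        rw [Finset.sum_congr rfl h1, Finset.sum_comm, Finset.sum_mul]
        refine Finset.sum_congr rfl fun κ hκ => ?_
        have h2 : ∀ P ∈ A'.powerset,
            (x m κ * tPoly x y P (y m)) * (if κ ∈ A' \ P then
              z * uPoly x y (A' \ P) (z + w) else 0)
            = (x m κ * z) * (if κ ∈ A' \ P then
              tPoly x y P (y m) * uPoly x y (A' \ P) (z + w) else 0) := by
          intro P _; split_ifs <;> ring
        rw [Finset.sum_congr rfl h2, ← Finset.mul_sum, hCL κ hκ (y m) (z + w)]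
        ring
      rw [first, second]
      ring
    · -- case j ≠ m
      have hjA' : j ∈ A' := Finset.mem_erase.2 ⟨hjm, hj⟩
      -- Step 1: expand part 1 (m ∈ complement) via DIA
      have step1 : ∀ Q ∈ A'.powerset,
          (if j ∈ Q then tPoly x y Q z * tPoly x y (insert m A' \ Q) w else 0)
          = ∑ P ∈ (A' \ Q).powerset,
              (if j ∈ Q then tPoly x y P (y m)
                * ((w + ∑ κ ∈ (A' \ Q) \ P, x m κ) * tPoly x y ((A' \ Q) \ P) w)
                * tPoly x y Q z else 0) := by
        intro Q hQ
        have hsub := Finset.mem_powerset.1 hQ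
        rw [insert_sdiff_of_subset hmA' hsub,
          DIA (hclub' (A' \ Q) Finset.sdiff_subset)
            (fun hc => hmA' (Finset.mem_sdiff.1 hc).1)
            (fun s hs => hlt s (Finset.mem_sdiff.1 hs).1) w]
        by_cases hjQ : j ∈ Q
        · rw [if_pos hjQ, Finset.mul_sum]
          exact Finset.sum_congr rfl fun P hP => by rw [if_pos hjQ]; ring
        · rw [if_neg hjQ]
          exact (Finset.sum_eq_zero fun P hP => if_neg hjQ).symm
      -- Step 2: expand part 2 (m ∈ Q) via DIA
      have step2 : ∀ Q' ∈ A'.powerset,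
          (if j ∈ insert m Q' then
            tPoly x y (insert m Q') z * tPoly x y (insert m A' \ insert m Q') w else 0)
          = ∑ P ∈ Q'.powerset,
              (if j ∈ P ∪ (Q' \ P) then tPoly x y P (y m)
                * ((z + ∑ κ ∈ Q' \ P, x m κ) * tPoly x y (Q' \ P) z)
                * tPoly x y (A' \ Q') w else 0) := by
        intro Q' hQ'
        have hsub := Finset.mem_powerset.1 hQ'
        have hmQ' : m ∉ Q' := fun hc => hmA' (hsub hc)
        have hltQ' : ∀ s ∈ Q', m < s := fun s hs => hlt s (hsub hs)
        rw [insert_sdiff_insert' hmA', DIA (hclub' Q' hsub) hmQ' hltQ' z]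
        by_cases hjQ : j ∈ Q'
        · rw [if_pos (Finset.mem_insert_of_mem hjQ), Finset.sum_mul]
          refine Finset.sum_congr rfl fun P hP => ?_
          rw [if_pos (by
            rw [Finset.union_sdiff_of_subset (Finset.mem_powerset.1 hP)]; exact hjQ)]
        · rw [if_neg (fun hc => hjQ ((Finset.mem_insert.1 hc).resolve_left hjm))]
          refine (Finset.sum_eq_zero fun P hP => if_neg fun hc => hjQ ?_).symm
          rwa [Finset.union_sdiff_of_subset (Finset.mem_powerset.1 hP)] at hc
      rw [Finset.sum_congr rfl step1, Finset.sum_congr rfl step2,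
        sum_powerset_swap A' (fun P B C =>
          if j ∈ B then tPoly x y P (y m) * ((w + ∑ κ ∈ C, x m κ) * tPoly x y C w)
            * tPoly x y B z else 0),
        sum_powerset_triple A' (fun P B C =>
          if j ∈ P ∪ B then tPoly x y P (y m) * ((z + ∑ κ ∈ B, x m κ) * tPoly x y B z)
            * tPoly x y C w else 0)]
      -- merge and regroup pointwise
      have hcomb : ∀ P ∈ A'.powerset, ∀ B ∈ (A' \ P).powerset,
          (if j ∈ B then tPoly x y P (y m)
              * ((w + ∑ κ ∈ (A' \ P) \ B, x m κ) * tPoly x y ((A' \ P) \ B) w)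
              * tPoly x y B z else 0)
          + (if j ∈ P ∪ B then tPoly x y P (y m)
              * ((z + ∑ κ ∈ B, x m κ) * tPoly x y B z)
              * tPoly x y ((A' \ P) \ B) w else 0)
          = (if j ∈ P then (z + ∑ κ ∈ B, x m κ)
                * (tPoly x y P (y m) * (tPoly x y B z * tPoly x y ((A' \ P) \ B) w)) else 0)
            + (if j ∈ B then ((z + w) + ∑ κ ∈ A' \ P, x m κ)
                * (tPoly x y P (y m) * (tPoly x y B z * tPoly x y ((A' \ P) \ B) w)) else 0)
          := by
        intro P hP B hB
        have hBsub : B ⊆ A' \ P := Finset.mem_powerset.1 hB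
        have hsum : (∑ κ ∈ (A' \ P) \ B, x m κ) + (∑ κ ∈ B, x m κ)
            = ∑ κ ∈ A' \ P, x m κ := Finset.sum_sdiff hBsub
        by_cases hjP : j ∈ P
        · have hjB : j ∉ B := fun hc => (Finset.mem_sdiff.1 (hBsub hc)).2 hjP
          rw [if_neg hjB, if_pos (Finset.mem_union_left _ hjP), if_pos hjP, if_neg hjB]
          ring
        · by_cases hjB : j ∈ B
          · rw [if_pos hjB, if_pos (Finset.mem_union_right _ hjB), if_neg hjP, if_pos hjB,
              ← hsum]
            ring
          · rw [if_neg hjB, if_neg (fun hc =>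
              (Finset.mem_union.1 hc).elim hjP hjB), if_neg hjP, if_neg hjB]
      have hmerge :
          (∑ P ∈ A'.powerset, ∑ B ∈ (A' \ P).powerset,
            (if j ∈ B then tPoly x y P (y m)
              * ((w + ∑ κ ∈ (A' \ P) \ B, x m κ) * tPoly x y ((A' \ P) \ B) w)
              * tPoly x y B z else 0))
          + (∑ P ∈ A'.powerset, ∑ B ∈ (A' \ P).powerset,
            (if j ∈ P ∪ B then tPoly x y P (y m)
              * ((z + ∑ κ ∈ B, x m κ) * tPoly x y B z)
              * tPoly x y ((A' \ P) \ B) w else 0))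
          = (∑ P ∈ A'.powerset, ∑ B ∈ (A' \ P).powerset,
              (if j ∈ P then (z + ∑ κ ∈ B, x m κ)
                * (tPoly x y P (y m) * (tPoly x y B z * tPoly x y ((A' \ P) \ B) w)) else 0))
            + (∑ P ∈ A'.powerset, ∑ B ∈ (A' \ P).powerset,
              (if j ∈ B then ((z + w) + ∑ κ ∈ A' \ P, x m κ)
                * (tPoly x y P (y m) * (tPoly x y B z * tPoly x y ((A' \ P) \ B) w)) else 0))
          := by
        rw [← Finset.sum_add_distrib, ← Finset.sum_add_distrib]
        refine Finset.sum_congr rfl fun P hP => ?_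
        rw [← Finset.sum_add_distrib, ← Finset.sum_add_distrib]
        exact Finset.sum_congr rfl fun B hB => hcomb P hP B hB
      rw [hmerge]
      -- Split G1 pointwise: (z + X_B) = z + indicator sum
      have G1eq :
          (∑ P ∈ A'.powerset, ∑ B ∈ (A' \ P).powerset,
            (if j ∈ P then (z + ∑ κ ∈ B, x m κ)
              * (tPoly x y P (y m) * (tPoly x y B z * tPoly x y ((A' \ P) \ B) w)) else 0))
          = z * (∑ P ∈ A'.powerset, ∑ B ∈ (A' \ P).powerset,
              (if j ∈ P then
                tPoly x y P (y m) * (tPoly x y B z * tPoly x y ((A' \ P) \ B) w) else 0))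
            + ∑ P ∈ A'.powerset, ∑ B ∈ (A' \ P).powerset, ∑ κ ∈ A',
              (if κ ∈ B then x m κ * (if j ∈ P then
                tPoly x y P (y m) * (tPoly x y B z * tPoly x y ((A' \ P) \ B) w) else 0)
              else 0) := by
        rw [Finset.mul_sum, ← Finset.sum_add_distrib]
        refine Finset.sum_congr rfl fun P hP => ?_
        rw [Finset.mul_sum, ← Finset.sum_add_distrib]
        refine Finset.sum_congr rfl fun B hB => ?_
        have hBsub : B ⊆ A' := (Finset.mem_powerset.1 hB).trans Finset.sdiff_subset
        by_cases hjP : j ∈ P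
        · simp only [if_pos hjP]
          rw [sum_sdiff_ite A' B hBsub (fun κ => x m κ), add_mul, Finset.sum_mul]
          congr 1
          refine Finset.sum_congr rfl fun κ _ => ?_
          split_ifs <;> simp
        · simp only [if_neg hjP]
          simp
      -- Evaluate the z-part of G1
      have E_Sz : (∑ P ∈ A'.powerset, ∑ B ∈ (A' \ P).powerset,
            (if j ∈ P then
              tPoly x y P (y m) * (tPoly x y B z * tPoly x y ((A' \ P) \ B) w) else 0))
          = y m * uPoly x y A' (y m + (z + w)) := by
        have h1 : ∀ P ∈ A'.powerset,
            ∑ B ∈ (A' \ P).powerset,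
              (if j ∈ P then
                tPoly x y P (y m) * (tPoly x y B z * tPoly x y ((A' \ P) \ B) w) else 0)
            = (if j ∈ P then tPoly x y P (y m) * tPoly x y (A' \ P) (z + w) else 0) := by
          intro P hP
          by_cases hjP : j ∈ P
          · simp only [if_pos hjP]
            rw [← TT (hclub' (A' \ P) Finset.sdiff_subset) z w, Finset.mul_sum]
          · simp only [if_neg hjP, Finset.sum_const_zero]
        rw [Finset.sum_congr rfl h1]
        exact hclub' A' (Finset.Subset.refl _) j hjA' (y m) (z + w)
      -- Evaluate the x-part of G1
      have E_Sx : (∑ P ∈ A'.powerset, ∑ B ∈ (A' \ P).powerset, ∑ κ ∈ A',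
            (if κ ∈ B then x m κ * (if j ∈ P then
              tPoly x y P (y m) * (tPoly x y B z * tPoly x y ((A' \ P) \ B) w) else 0)
            else 0))
          = ∑ κ ∈ A', ∑ P ∈ A'.powerset,
              (if j ∈ P then (x m κ * tPoly x y P (y m))
                * (if κ ∈ A' \ P then z * uPoly x y (A' \ P) (z + w) else 0) else 0) := by
        rw [← Finset.sum_comm]
        refine Finset.sum_congr rfl fun P hP => ?_
        rw [Finset.sum_comm]
        refine Finset.sum_congr rfl fun κ hκ => ?_
        by_cases hjP : j ∈ P
        · simp only [if_pos hjP]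
          rw [← marked_inner (hclub' (A' \ P) Finset.sdiff_subset) κ z w, Finset.mul_sum]
          refine Finset.sum_congr rfl fun B hB => ?_
          split_ifs <;> ring
        · simp only [if_neg hjP]
          simp
      -- Evaluate G2
      have E_G2 : (∑ P ∈ A'.powerset, ∑ B ∈ (A' \ P).powerset,
            (if j ∈ B then ((z + w) + ∑ κ ∈ A' \ P, x m κ)
              * (tPoly x y P (y m) * (tPoly x y B z * tPoly x y ((A' \ P) \ B) w)) else 0))
          = ((z + w) * z) * uPoly x y A' (y m + (z + w))
            + ∑ κ ∈ A', ∑ P ∈ A'.powerset,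
                (if κ ∈ A' \ P then x m κ * (tPoly x y P (y m)
                  * (if j ∈ A' \ P then z * uPoly x y (A' \ P) (z + w) else 0)) else 0) := by
        have h1 : ∀ P ∈ A'.powerset,
            ∑ B ∈ (A' \ P).powerset,
              (if j ∈ B then ((z + w) + ∑ κ ∈ A' \ P, x m κ)
                * (tPoly x y P (y m) * (tPoly x y B z * tPoly x y ((A' \ P) \ B) w)) else 0)
            = (((z + w) + ∑ κ ∈ A' \ P, x m κ) * tPoly x y P (y m))
                * (if j ∈ A' \ P then z * uPoly x y (A' \ P) (z + w) else 0) := by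
          intro P hP
          rw [← marked_inner (hclub' (A' \ P) Finset.sdiff_subset) j z w, Finset.mul_sum]
          refine Finset.sum_congr rfl fun B hB => ?_
          split_ifs <;> ring
        rw [Finset.sum_congr rfl h1]
        have h2 : ∀ P ∈ A'.powerset,
            (((z + w) + ∑ κ ∈ A' \ P, x m κ) * tPoly x y P (y m))
              * (if j ∈ A' \ P then z * uPoly x y (A' \ P) (z + w) else 0)
            = ((z + w) * z) * (if j ∈ A' \ P then
                tPoly x y P (y m) * uPoly x y (A' \ P) (z + w) else 0)
              + ∑ κ ∈ A', (if κ ∈ A' \ P then x m κ * (tPoly x y P (y m)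
                  * (if j ∈ A' \ P then z * uPoly x y (A' \ P) (z + w) else 0)) else 0) := by
          intro P hP
          rw [sum_sdiff_ite A' (A' \ P) Finset.sdiff_subset (fun κ => x m κ), add_mul,
            Finset.sum_mul, add_mul, Finset.sum_mul]
          congr 1
          · split_ifs <;> ring
          · refine Finset.sum_congr rfl fun κ _ => ?_
            split_ifs <;> ring
        rw [Finset.sum_congr rfl h2, Finset.sum_add_distrib, ← Finset.mul_sum,
          hCL j hjA' (y m) (z + w)]
        congr 1
        exact Finset.sum_comm
      rw [G1eq, E_Sz, E_Sx, E_G2]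
      -- Combine the two κ-sums
      have E_comb : ∀ κ ∈ A',
          (∑ P ∈ A'.powerset,
            (if j ∈ P then (x m κ * tPoly x y P (y m))
              * (if κ ∈ A' \ P then z * uPoly x y (A' \ P) (z + w) else 0) else 0))
          + (∑ P ∈ A'.powerset,
            (if κ ∈ A' \ P then x m κ * (tPoly x y P (y m)
              * (if j ∈ A' \ P then z * uPoly x y (A' \ P) (z + w) else 0)) else 0))
          = x m κ * (z * uPoly x y A' (y m + (z + w))) := by
        intro κ hκ
        rw [← Finset.sum_add_distrib]
        have point : ∀ P ∈ A'.powerset,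
            (if j ∈ P then (x m κ * tPoly x y P (y m))
              * (if κ ∈ A' \ P then z * uPoly x y (A' \ P) (z + w) else 0) else 0)
            + (if κ ∈ A' \ P then x m κ * (tPoly x y P (y m)
              * (if j ∈ A' \ P then z * uPoly x y (A' \ P) (z + w) else 0)) else 0)
            = (x m κ * z) * (if κ ∈ A' \ P then
                tPoly x y P (y m) * uPoly x y (A' \ P) (z + w) else 0) := by
          intro P hP
          by_cases hjP : j ∈ P
          · have hjC : j ∉ A' \ P := fun hc => (Finset.mem_sdiff.1 hc).2 hjP
            simp only [if_pos hjP, if_neg hjC]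
            split_ifs <;> ring
          · have hjC : j ∈ A' \ P := Finset.mem_sdiff.2 ⟨hjA', hjP⟩
            simp only [if_neg hjP, if_pos hjC]
            split_ifs <;> ring
        rw [Finset.sum_congr rfl point, ← Finset.mul_sum, hCL κ hκ (y m) (z + w)]
        ring
      have E_combsum :
          (∑ κ ∈ A', ∑ P ∈ A'.powerset,
            (if j ∈ P then (x m κ * tPoly x y P (y m))
              * (if κ ∈ A' \ P then z * uPoly x y (A' \ P) (z + w) else 0) else 0))
          + (∑ κ ∈ A', ∑ P ∈ A'.powerset,
            (if κ ∈ A' \ P then x m κ * (tPoly x y P (y m)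
              * (if j ∈ A' \ P then z * uPoly x y (A' \ P) (z + w) else 0)) else 0))
          = (∑ κ ∈ A', x m κ) * (z * uPoly x y A' (y m + (z + w))) := by
        rw [← Finset.sum_add_distrib, Finset.sum_congr rfl E_comb, ← Finset.sum_mul]
      have final : ∀ a b c d H : R,
          (z * a + b) + (((z + w) * z) * d + c)
            = (b + c) + (z * a + ((z + w) * z) * d) := fun a b c d H => by ring
      rw [final _ _ _ _ (∑ κ ∈ A', x m κ), E_combsum]
      ring

end clubstep

/-- The full induction package, over all commutative rings in `Type 0`. -/
def Pack (n : ℕ) : Prop :=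
  ∀ (R₀ : Type) [CommRing R₀] (x : ℕ → ℕ → R₀) (y : ℕ → R₀) (A : Finset ℕ),
    A.card ≤ n → ClubEq R₀ x y A ∧ SEq R₀ x y A

lemma pack_of (n : ℕ) : Pack n := by
  induction n with
  | zero =>
    intro R₀ _ x y A hcard
    have hA : A = ∅ := Finset.card_eq_zero.1 (Nat.le_zero.1 hcard)
    subst hA
    constructor
    · intro j hj; exact absurd hj (Finset.notMem_empty j)
    · intro z w
      simp [sPoly, tPoly]
  | succ n IH =>
    intro R₀ _ x y A hcard
    rcases Nat.lt_or_ge A.card (n + 1) with hlt | hge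
    · exact IH R₀ x y A (Nat.lt_succ_iff.1 hlt)
    · have hcard' : A.card = n + 1 := le_antisymm hcard hge
      have hA : A.Nonempty := Finset.card_pos.1 (by omega)
      have hcardA' : (A.erase (A.min' hA)).card = n := by
        rw [Finset.card_erase_of_mem (A.min'_mem hA), hcard']; omega
      have hclub' : ∀ T ⊆ A.erase (A.min' hA), ClubEq R₀ x y T := fun T hT =>
        (IH R₀ x y T (hcardA' ▸ Finset.card_le_card hT)).1
      have hS' : ∀ L ⊆ A.erase (A.min' hA), SEq R₀ x y L := fun L hL =>
        (IH R₀ x y L (hcardA' ▸ Finset.card_le_card hL)).2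
      have hCL : ∀ κ ∈ A.erase (A.min' hA), ∀ a b : R₀,
          ∑ Q ∈ (A.erase (A.min' hA)).powerset,
            (if κ ∈ A.erase (A.min' hA) \ Q then
              tPoly x y Q a * uPoly x y (A.erase (A.min' hA) \ Q) b else 0)
          = uPoly x y (A.erase (A.min' hA)) (a + b) := fun κ hκ a b =>
        CL (fun R₁ _ x₁ y₁ => (IH R₁ x₁ y₁ _ (le_of_eq hcardA')).1) hκ x y a b
      exact ⟨club_step hA hclub' hCL, s_step hA hS' hclub'⟩

end Strehl

/-- Strehl's convolution identity:
`s_A(x,y;z+w) = ∑_{L ⊔ R = A} s_L(x,y;z) · t_R(x,y;w)`, the sum being over ordered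
pairs of disjoint sets `L, R` with union `A`, i.e. over `L ⊆ A` with `R = A \ L`. -/
theorem sPoly_convolution (x : ℕ → ℕ → R) (y : ℕ → R) (A : Finset ℕ)
    (hA : ∀ a ∈ A, 0 < a) (z w : R) :
    sPoly x y A (z + w) = ∑ L ∈ A.powerset, sPoly x y L z * tPoly x y (A \ L) w := by
  classical
  have gen := (Strehl.pack_of A.card Strehl.RR Strehl.Xg Strehl.Yg A le_rfl).2
    Strehl.ag Strehl.bg
  let g : (ℕ ⊕ ((ℕ × ℕ) ⊕ ℕ)) → R := fun s =>
    match s with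
    | Sum.inl j => y j
    | Sum.inr (Sum.inl (i, j)) => x i j
    | Sum.inr (Sum.inr 0) => z
    | Sum.inr (Sum.inr (_ + 1)) => w
  let φ : Strehl.RR →+* R := (MvPolynomial.aeval g).toRingHom
  have hfx : (fun i j => φ (Strehl.Xg i j)) = x := by
    funext i j; simp [φ, Strehl.Xg, g]
  have hfy : (fun j => φ (Strehl.Yg j)) = y := by
    funext j; simp [φ, Strehl.Yg, g]
  have ha : φ Strehl.ag = z := by simp [φ, Strehl.ag, g]
  have hb : φ Strehl.bg = w := by simp [φ, Strehl.bg, g]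
  have h := congrArg φ gen
  simp only [map_sum, map_mul, map_add, Strehl.map_sPoly, Strehl.map_tPoly,
    hfx, hfy, ha, hb] at h
  exact h
end

section
/- Binomial-type convolution identity: for a finite set A of positive integers, t_A(x, y; z + w) = ∑_{B ⊔ C = A} t_B(x, y; z) · t_C(x, y; w), summing over ordered pairs of disjoint sets B, C with B ∪ C = A. -/
variable {R : Type*} [CommRing R]

/-
Write the factor of `a` in `t_S` as `v + ∑_{j ∈ S} d(j, a)`, where `d(j, a) = y_j` for `j ≤ a` and
`d(j, a) = x_{a,j}` for `j > a`, and allow an extra shift `c_a` in every factor: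
`P_S(c; v) = v ∏_{a ∈ S} (v + ∑_{j ∈ S} d(j, a) + c_a)`. Since `d(j, M) = y_j` for the maximum `M`
of `S`, removing `M` leaves the factor `v + Y_S + c_M` and shifts the other factors by `d(M, ·)`;
in particular `t_S(v) = P_{S ∖ M}(d(M, ·); v)`. The identity
`P_A(c; z + w) = ∑_B [t_B(z) P_{A ∖ B}(c; w) + P_B(c; z) t_{A ∖ B}(w)]` for every shift `c` then
follows by induction on the maximum of `A`: the factor of `M` splits between the two blocks, and
what remains is that `∑_B [P_B(c; z) P_{A ∖ B}(u; w) + P_B(u; z) P_{A ∖ B}(c; w)]` depends on the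
shifts only through `c + u`. That holds for every weight `d`, by strong induction on `A`: expanding
in an increment `δ` of a shift expresses this sum through the same sums on smaller sets.
-/

open Finset

namespace Finset

variable {α β : Type*} [DecidableEq α] [AddCommMonoid β]

theorem sum_powerset_sum_powerset_comm (s : Finset α) (f : Finset α → Finset α → β) :
    ∑ t ∈ s.powerset, ∑ p ∈ t.powerset, f p t
      = ∑ p ∈ s.powerset, ∑ r ∈ (s \ p).powerset, f p (p ∪ r) := by
  rw [sum_comm' (t' := s.powerset) (s' := fun p => Icc p s)
    (fun t p => by simp only [mem_powerset, mem_Icc]; tauto)]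
  refine sum_congr rfl fun p hp => ?_
  rw [Icc_eq_image_powerset (mem_powerset.1 hp), sum_image]
  intro r hr r' hr' h
  simpa [union_sdiff_cancel_left (disjoint_of_subset_right (mem_powerset.1 hr) disjoint_sdiff),
    union_sdiff_cancel_left (disjoint_of_subset_right (mem_powerset.1 hr') disjoint_sdiff)]
    using congrArg (· \ p) h

theorem sum_powerset_sdiff_comm (s : Finset α) (f : Finset α → Finset α → β) :
    ∑ t ∈ s.powerset, f t (s \ t) = ∑ t ∈ s.powerset, f (s \ t) t :=
  sum_nbij' (s \ ·) (s \ ·) (by simp) (by simp)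
    (fun t ht => sdiff_sdiff_eq_self (mem_powerset.1 ht))
    (fun t ht => sdiff_sdiff_eq_self (mem_powerset.1 ht))
    (fun t ht => by rw [sdiff_sdiff_eq_self (mem_powerset.1 ht)])

theorem sum_powerset_insert_sdiff {a : α} {s : Finset α} (ha : a ∉ s)
    (f : Finset α → Finset α → β) :
    ∑ t ∈ (insert a s).powerset, f t (insert a s \ t)
      = ∑ t ∈ s.powerset, (f t (insert a (s \ t)) + f (insert a t) (s \ t)) := by
  rw [sum_powerset_insert ha, ← sum_add_distrib]
  refine sum_congr rfl fun t ht => ?_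
  have hat : a ∉ t := fun h => ha (mem_powerset.1 ht h)
  rw [insert_sdiff_of_notMem _ hat, insert_sdiff_insert, sdiff_insert_of_notMem ha]

end Finset

section ShiftProd

variable {α K : Type*} [DecidableEq α] [CommSemiring K] (d : α → α → K)

def shiftProd (s : Finset α) (c : α → K) (v : K) : K :=
  v * ∏ a ∈ s, (v + ∑ j ∈ s, d j a + c a)

theorem shiftProd_insert {u : α} {s : Finset α} (hu : u ∉ s) (c : α → K) (v : K) :
    shiftProd d (insert u s) c v
      = (v + ∑ j ∈ insert u s, d j u + c u) * shiftProd d s (c + d u) v := by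
  simp only [shiftProd, prod_insert hu, Pi.add_apply]
  rw [mul_left_comm]
  congr 2
  refine prod_congr rfl fun a _ => ?_
  rw [sum_insert hu]
  ring

theorem shiftProd_shift_add (s : Finset α) (c δ : α → K) (v : K) :
    shiftProd d s (c + δ) v
      = ∑ p ∈ s.powerset, (∏ a ∈ p, δ a) * shiftProd d (s \ p) (c + ∑ j ∈ p, d j) v := by
  have hsplit : ∀ a, v + ∑ j ∈ s, d j a + (c + δ) a = δ a + (v + ∑ j ∈ s, d j a + c a) := by
    intro a; simp only [Pi.add_apply]; ring
  unfold shiftProd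
  rw [prod_congr rfl fun a _ => hsplit a, prod_add, mul_sum]
  refine sum_congr rfl fun p hp => ?_
  have hfactor : ∀ a, v + ∑ j ∈ s, d j a + c a
      = v + ∑ j ∈ s \ p, d j a + (c + ∑ j ∈ p, d j) a := by
    intro a
    rw [← sum_sdiff (mem_powerset.1 hp), Pi.add_apply, Finset.sum_apply]
    ring
  rw [prod_congr rfl fun a _ => hfactor a]
  ring

def shiftConv (s : Finset α) (c u : α → K) (z w : K) : K :=
  ∑ t ∈ s.powerset, shiftProd d t c z * shiftProd d (s \ t) u w

theorem shiftConv_swap (s : Finset α) (c u : α → K) (z w : K) :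
    shiftConv d s c u z w = shiftConv d s u c w z := by
  simp only [shiftConv]
  rw [sum_powerset_sdiff_comm s fun t t' => shiftProd d t c z * shiftProd d t' u w]
  simp only [mul_comm]

theorem shiftConv_add_left (s : Finset α) (c δ u : α → K) (z w : K) :
    shiftConv d s (c + δ) u z w
      = ∑ p ∈ s.powerset, (∏ a ∈ p, δ a) * shiftConv d (s \ p) (c + ∑ j ∈ p, d j) u z w := by
  simp only [shiftConv, shiftProd_shift_add d _ c δ, sum_mul]
  rw [sum_powerset_sum_powerset_comm s
    fun p t => (∏ a ∈ p, δ a) * shiftProd d (t \ p) (c + ∑ j ∈ p, d j) z * shiftProd d (s \ t) u w]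
  refine sum_congr rfl fun p hp => ?_
  rw [mul_sum]
  refine sum_congr rfl fun t ht => ?_
  rw [union_sdiff_cancel_left (disjoint_of_subset_right (mem_powerset.1 ht) disjoint_sdiff),
    sdiff_sdiff_left, mul_assoc]
  rfl

def shiftConvSymm (s : Finset α) (c u : α → K) (z w : K) : K :=
  shiftConv d s c u z w + shiftConv d s u c z w

theorem shiftConvSymm_comm (s : Finset α) (c u : α → K) (z w : K) :
    shiftConvSymm d s c u z w = shiftConvSymm d s u c z w :=
  add_comm _ _

theorem shiftConvSymm_add_left (s : Finset α) (c δ u : α → K) (z w : K) :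
    shiftConvSymm d s (c + δ) u z w
      = ∑ p ∈ s.powerset, (∏ a ∈ p, δ a) * shiftConvSymm d (s \ p) (c + ∑ j ∈ p, d j) u z w := by
  simp only [shiftConvSymm, shiftConv_swap d _ u, shiftConv_add_left d _ c δ, mul_add,
    sum_add_distrib]

theorem shiftConvSymm_add_left_eq_add_right (s : Finset α) (c δ u : α → K) (z w : K) :
    shiftConvSymm d s (c + δ) u z w = shiftConvSymm d s c (u + δ) z w := by
  induction s using strongInduction generalizing c δ u with
  | H s ih =>
    -- expand both sides in `δ`: the terms with `p ≠ ∅` live on the smaller sets `s \ p`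
    rw [shiftConvSymm_comm d s c, shiftConvSymm_add_left, shiftConvSymm_add_left]
    refine sum_congr rfl fun p hp => ?_
    rcases p.eq_empty_or_nonempty with rfl | hne
    · simp [shiftConvSymm_comm d s u c]
    rw [shiftConvSymm_comm d _ (u + _), ih _ (sdiff_ssubset (mem_powerset.1 hp) hne)]

end ShiftProd

section Strehl

variable (x : ℕ → ℕ → R) (y : ℕ → R)

def strehlWeight (j a : ℕ) : R := if j ≤ a then y j else x a j

theorem add_sum_filter_eq_add_sum_strehlWeight (A : Finset ℕ) (a : ℕ) (z : R) :
    z + ∑ j ∈ A.filter (fun j => j ≤ a), y j + ∑ j ∈ A.filter (fun j => a < j), x a j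
      = z + ∑ j ∈ A, strehlWeight x y j a := by
  simp only [strehlWeight, sum_ite, not_le, add_assoc]

variable {x y}

theorem tPoly_insert_of_forall_lt {M : ℕ} {A : Finset ℕ} (hA : ∀ a ∈ A, a < M) (v : R) :
    tPoly x y (insert M A) v = shiftProd (strehlWeight x y) A (strehlWeight x y M) v := by
  have hM : M ∉ A := fun h => (hA M h).false
  have hfilter : (insert M A).filter (fun a => ∃ b ∈ insert M A, a < b) = A := by
    ext a
    simp only [mem_filter, mem_insert, exists_eq_or_imp]
    constructor
    · rintro ⟨rfl | ha, hlt | ⟨b, hb, hlt⟩⟩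
      exacts [(lt_irrefl _ hlt).elim, ((hA b hb).trans hlt).false.elim, ha, ha]
    · exact fun ha => ⟨Or.inr ha, Or.inl (hA a ha)⟩
  rw [tPoly, if_neg (insert_ne_empty M A), hfilter, shiftProd]
  refine congrArg _ (prod_congr rfl fun a _ => ?_)
  rw [add_sum_filter_eq_add_sum_strehlWeight, sum_insert hM]
  ring

theorem shiftProd_strehlWeight_insert_of_forall_lt {M : ℕ} {A : Finset ℕ}
    (hA : ∀ a ∈ A, a < M) (c : ℕ → R) (v : R) :
    shiftProd (strehlWeight x y) (insert M A) c v
      = (v + ∑ j ∈ insert M A, y j + c M)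
          * shiftProd (strehlWeight x y) A (c + strehlWeight x y M) v := by
  rw [shiftProd_insert _ (fun h => (hA M h).false)]
  congr 3
  refine sum_congr rfl fun j hj => if_pos ?_
  rcases mem_insert.1 hj with rfl | hj
  exacts [le_rfl, (hA j hj).le]

theorem add_sum_mul_tPoly (A : Finset ℕ) (v : R) :
    (v + ∑ j ∈ A, y j) * tPoly x y A v = shiftProd (strehlWeight x y) A 0 v := by
  induction A using Finset.induction_on_max with
  | empty => simp [tPoly, shiftProd]
  | insert M A hA _ =>
    rw [tPoly_insert_of_forall_lt hA, shiftProd_strehlWeight_insert_of_forall_lt hA, zero_add,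
      Pi.zero_apply, add_zero]

theorem shiftProd_strehlWeight_convolution (A : Finset ℕ) (c : ℕ → R) (z w : R) :
    shiftProd (strehlWeight x y) A c (z + w)
      = ∑ B ∈ A.powerset, (tPoly x y B z * shiftProd (strehlWeight x y) (A \ B) c w
          + shiftProd (strehlWeight x y) B c z * tPoly x y (A \ B) w) := by
  induction A using Finset.induction_on_max generalizing c with
  | empty => simp [tPoly, shiftProd, add_comm]
  | insert M A hA ih =>
    have hM : M ∉ A := fun h => (hA M h).false
    have hsymm := shiftConvSymm_add_left_eq_add_right (strehlWeight x y) A 0 c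
      (strehlWeight x y M) z w
    rw [zero_add, add_comm (strehlWeight x y M)] at hsymm
    simp only [shiftConvSymm, shiftConv, ← sum_add_distrib] at hsymm
    -- once the factor `z + w + Y_A + c M` of `M` is split between the two blocks, the two sides
    -- differ blockwise by the two sides of `hsymm`
    rw [shiftProd_strehlWeight_insert_of_forall_lt hA, ih, mul_sum, sum_powerset_insert_sdiff hM
        fun B C => tPoly x y B z * shiftProd (strehlWeight x y) C c w
          + shiftProd (strehlWeight x y) B c z * tPoly x y C w,
      ← sub_eq_zero, ← sum_sub_distrib, ← sub_eq_zero.2 hsymm.symm, ← sum_sub_distrib]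
    refine sum_congr rfl fun B hB => ?_
    have hBA : B ⊆ A := mem_powerset.1 hB
    have hBM : ∀ a ∈ B, a < M := fun a ha => hA a (hBA ha)
    have hCM : ∀ a ∈ A \ B, a < M := fun a ha => hA a (mem_sdiff.1 ha).1
    have hY : ∑ j ∈ insert M A, y j = y M + ∑ j ∈ B, y j + ∑ j ∈ A \ B, y j := by
      rw [sum_insert hM, ← sum_sdiff hBA]; ring
    rw [tPoly_insert_of_forall_lt hBM, tPoly_insert_of_forall_lt hCM,
      shiftProd_strehlWeight_insert_of_forall_lt hBM,
      shiftProd_strehlWeight_insert_of_forall_lt hCM,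
      sum_insert (fun h => (hBM M h).false), sum_insert (fun h => (hCM M h).false), hY,
      ← add_sum_mul_tPoly B z, ← add_sum_mul_tPoly (A \ B) w]
    ring

end Strehl

theorem tPoly_convolution_general (x : ℕ → ℕ → R) (y : ℕ → R) (A : Finset ℕ)
    (z w : R) :
    tPoly x y A (z + w) = ∑ B ∈ A.powerset, tPoly x y B z * tPoly x y (A \ B) w := by
  induction A using Finset.induction_on_max with
  | empty => simp [tPoly]
  | insert M A hA _ =>
    have hM : M ∉ A := fun h => (hA M h).false
    rw [tPoly_insert_of_forall_lt hA, shiftProd_strehlWeight_convolution,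
      sum_powerset_insert_sdiff hM fun B C => tPoly x y B z * tPoly x y C w]
    refine sum_congr rfl fun B hB => ?_
    have hBA : B ⊆ A := mem_powerset.1 hB
    rw [tPoly_insert_of_forall_lt fun a ha => hA a (hBA ha),
      tPoly_insert_of_forall_lt fun a ha => hA a (mem_sdiff.1 ha).1]

/-- Binomial-type convolution identity:
`t_A(x,y;z+w) = ∑_{B ⊔ C = A} t_B(x,y;z) · t_C(x,y;w)`, the sum being over ordered
pairs of disjoint sets `B, C` with union `A`, i.e. over `B ⊆ A` with `C = A \ B`. -/
theorem tPoly_convolution (x : ℕ → ℕ → R) (y : ℕ → R) (A : Finset ℕ)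
    (hA : ∀ a ∈ A, 0 < a) (z w : R) :
    tPoly x y A (z + w) = ∑ B ∈ A.powerset, tPoly x y B z * tPoly x y (A \ B) w :=
  tPoly_convolution_general x y A z w
end

section
/- Setting all x_{i,j} = b and all y_j = c constant, the identity s_A(z+w) = ∑_{L ⊔ R = A} s_L(z) t_R(w) with |A| = n specializes to the Abel–Rothe convolution: ∏_{k=1}^{n}(z+w+kc+(n-k)b) = ∑_{m=0}^{n} C(n,m) [∏_{k=1}^{m}(z+kc+(m-k)b)] · [w ∏_{k=1}^{m'-1}(w+kc+(m'-k)b)] where m' = n - m. -/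
variable {R : Type*} [CommRing R]

/-! ### Auxiliary machinery for the Abel–Rothe convolution -/

/-- `Af b c z n = ∏_{k=1}^{n} (z + k c + (n-k) b)`, the "s-type" product. -/
def Af (b c z : R) (n : ℕ) : R := ∏ k ∈ Finset.Icc 1 n, (z + k • c + (n - k) • b)

/-- `Bf b c w p = w ∏_{k=1}^{p-1} (w + k c + (p-k) b)` for `p ≠ 0`, and `1` for `p = 0`,
the "t-type" product. -/
def Bf (b c w : R) (p : ℕ) : R :=
  if p = 0 then 1 else w * ∏ k ∈ Finset.Icc 1 (p - 1), (w + k • c + (p - k) • b)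

/-- The Abel–Rothe convolution sum. -/
def rhsS (b c z w : R) (n : ℕ) : R :=
  ∑ m ∈ Finset.range (n + 1), (n.choose m : R) * Af b c z m * Bf b c w (n - m)

lemma Af_zero (b c z : R) : Af b c z 0 = 1 := by simp [Af]

lemma Af_succ (b c z : R) (n : ℕ) :
    Af b c z (n + 1) = (z + (n + 1) • c) * Af b c (z + b) n := by
  unfold Af
  rw [Finset.prod_Icc_succ_top (Nat.le_add_left 1 n), mul_comm]
  congr 1
  · simp
  · refine Finset.prod_congr rfl fun k hk => ?_
    rw [Finset.mem_Icc] at hk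
    rw [show n + 1 - k = (n - k) + 1 by omega, succ_nsmul]
    ring

lemma Bf_succ (b c w : R) (p : ℕ) :
    Bf b c w (p + 1) = w * Af b c (w + b) p := by
  unfold Bf Af
  rw [if_neg p.succ_ne_zero, Nat.add_sub_cancel]
  congr 1
  refine Finset.prod_congr rfl fun k hk => ?_
  rw [Finset.mem_Icc] at hk
  rw [show p + 1 - k = (p - k) + 1 by omega, succ_nsmul]
  ring

lemma Bf_zero_left (b c : R) (p : ℕ) : Bf b c 0 p = if p = 0 then 1 else 0 := by
  unfold Bf; split_ifs <;> simp

/-- The finite-difference equation for `Af` in the direction `c - b`. -/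
lemma Af_shift (b c : R) : ∀ n, ∀ z : R,
    Af b c (z + (c - b)) (n + 1)
      = Af b c z (n + 1) + (c - b) * ((n : R) + 1) * Af b c (z + c) n := by
  intro n
  induction n with
  | zero =>
    intro z
    simp only [Af_succ, Af_zero, Nat.cast_zero, one_smul]
    ring
  | succ n ih =>
    intro z
    have h1 := ih (z + b)
    rw [show z + b + (c - b) = z + c by ring] at h1
    have h3 : Af b c (z + c) (n + 1) = (z + c + (n + 1) • c) * Af b c (z + b + c) n := by
      rw [Af_succ, show z + c + b = z + b + c by ring]
    rw [Af_succ b c (z + (c - b)) (n + 1), show z + (c - b) + b = z + c by ring,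
        Af_succ b c z (n + 1)]
    simp only [nsmul_eq_mul] at h1 h3 ⊢
    push_cast at h1 h3 ⊢
    linear_combination (z + ((n : R) + 2) * c) * h1 - (c - b) * ((n : R) + 1) * h3

/-- The finite-difference equation for `Bf` in the direction `c - b`. -/
lemma Bf_shift (b c : R) : ∀ p, ∀ w : R,
    Bf b c (w + (c - b)) p
      = Bf b c w p + (c - b) * (p : R) * Bf b c (w + c) (p - 1) := by
  intro p
  match p with
  | 0 => intro w; simp [Bf]
  | 1 =>
    intro w
    show Bf b c (w + (c - b)) (0 + 1)
        = Bf b c w (0 + 1) + (c - b) * ((1 : ℕ) : R) * Bf b c (w + c) 0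
    rw [Bf_succ, Bf_succ, show (0 : ℕ) = 1 - 1 from rfl]
    simp [Bf, Af_zero]
  | (q + 2) =>
    intro w
    have h1 := Af_shift b c q (w + b)
    rw [show w + b + (c - b) = w + c by ring] at h1
    have h3 : Af b c (w + c) (q + 1) = (w + c + (q + 1) • c) * Af b c (w + b + c) q := by
      rw [Af_succ, show w + c + b = w + b + c by ring]
    rw [show q + 2 - 1 = q + 1 from rfl,
        Bf_succ b c (w + (c - b)) (q + 1), show w + (c - b) + b = w + c by ring,
        Bf_succ b c w (q + 1), Bf_succ b c (w + c) q, show w + c + b = w + b + c by ring]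
    simp only [nsmul_eq_mul] at h1 h3 ⊢
    push_cast at h1 h3 ⊢
    linear_combination w * h1 + (c - b) * h3

/-- The finite-difference equation for the convolution sum, assuming the identity
in one lower degree. -/
lemma rhsS_shift (b c z : R) (n : ℕ)
    (IH : ∀ w : R, Af b c (z + w) n = rhsS b c z w n) (w : R) :
    rhsS b c z (w + (c - b)) (n + 1)
      = rhsS b c z w (n + 1) + (c - b) * ((n : R) + 1) * Af b c (z + (w + c)) n := by
  have h1 : ∀ m ∈ Finset.range (n + 2),
      ((n + 1).choose m : R) * Af b c z m * Bf b c (w + (c - b)) (n + 1 - m)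
        = ((n + 1).choose m : R) * Af b c z m * Bf b c w (n + 1 - m)
          + (c - b) * (((n + 1).choose m : R) * ((n + 1 - m : ℕ) : R) * Af b c z m
              * Bf b c (w + c) (n - m)) := by
    intro m hm
    rw [Bf_shift b c (n + 1 - m) w, show (n + 1 - m) - 1 = n - m by omega]
    ring
  have h2 : ∑ m ∈ Finset.range (n + 2),
      ((n + 1).choose m : R) * ((n + 1 - m : ℕ) : R) * Af b c z m * Bf b c (w + c) (n - m)
        = ((n : R) + 1) * Af b c (z + (w + c)) n := by
    rw [Finset.sum_range_succ]
    have hlast : ((n + 1).choose (n + 1) : R) * ((n + 1 - (n + 1) : ℕ) : R)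
        * Af b c z (n + 1) * Bf b c (w + c) (n - (n + 1)) = 0 := by
      simp
    rw [hlast, add_zero]
    have h3 : ∀ m ∈ Finset.range (n + 1),
        ((n + 1).choose m : R) * ((n + 1 - m : ℕ) : R) * Af b c z m * Bf b c (w + c) (n - m)
          = ((n : R) + 1) * ((n.choose m : R) * Af b c z m * Bf b c (w + c) (n - m)) := by
      intro m hm
      have hc := congrArg (fun t : ℕ => (t : R)) (Nat.choose_mul_succ_eq n m)
      simp only [Nat.cast_mul] at hc
      push_cast [-Nat.cast_sub] at hc
      linear_combination Af b c z m * Bf b c (w + c) (n - m) * hc.symm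
    rw [Finset.sum_congr rfl h3, ← Finset.mul_sum]
    congr 1
    exact (IH (w + c)).symm
  unfold rhsS
  rw [Finset.sum_congr rfl h1, Finset.sum_add_distrib, ← Finset.mul_sum, h2]
  ring

/-- At `w = 0` the convolution sum collapses to its top term. -/
lemma rhsS_zero_right (b c z : R) (n : ℕ) : rhsS b c z 0 n = Af b c z n := by
  unfold rhsS
  rw [Finset.sum_range_succ]
  have hz : ∀ m ∈ Finset.range n,
      (n.choose m : R) * Af b c z m * Bf b c 0 (n - m) = 0 := by
    intro m hm
    rw [Finset.mem_range] at hm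
    rw [Bf_zero_left, if_neg (by omega)]
    ring
  rw [Finset.sum_congr rfl hz, Finset.sum_const_zero, zero_add, Nat.sub_self,
      Nat.choose_self]
  simp [Bf]

/-! ### Polynomial realization in the variable `w` -/

/-- `Af b c (z + ·) n` as a polynomial. -/
noncomputable def APol (b c z : R) (n : ℕ) : Polynomial R :=
  ∏ k ∈ Finset.Icc 1 n, (Polynomial.C (z + k • c + (n - k) • b) + Polynomial.X)

/-- `Bf b c · p` as a polynomial. -/
noncomputable def BPol (b c : R) (p : ℕ) : Polynomial R :=
  if p = 0 then 1
  else Polynomial.X * ∏ k ∈ Finset.Icc 1 (p - 1), (Polynomial.X + Polynomial.C (k • c + (p - k) • b))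

/-- `rhsS b c z · n` as a polynomial. -/
noncomputable def RPol (b c z : R) (n : ℕ) : Polynomial R :=
  ∑ m ∈ Finset.range (n + 1), Polynomial.C ((n.choose m : R) * Af b c z m) * BPol b c (n - m)

lemma APol_eval (b c z : R) (n : ℕ) (w : R) : (APol b c z n).eval w = Af b c (z + w) n := by
  unfold APol Af
  rw [Polynomial.eval_prod]
  refine Finset.prod_congr rfl fun k hk => ?_
  simp only [Polynomial.eval_add, Polynomial.eval_C, Polynomial.eval_X]
  ring

lemma BPol_eval (b c : R) (p : ℕ) (w : R) : (BPol b c p).eval w = Bf b c w p := by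
  unfold BPol Bf
  split_ifs with h
  · simp
  · rw [Polynomial.eval_mul, Polynomial.eval_X, Polynomial.eval_prod]
    congr 1
    refine Finset.prod_congr rfl fun k hk => ?_
    simp only [Polynomial.eval_add, Polynomial.eval_C, Polynomial.eval_X]
    ring

lemma RPol_eval (b c z : R) (n : ℕ) (w : R) : (RPol b c z n).eval w = rhsS b c z w n := by
  unfold RPol rhsS
  rw [Polynomial.eval_finset_sum]
  refine Finset.sum_congr rfl fun m hm => ?_
  rw [Polynomial.eval_mul, Polynomial.eval_C, BPol_eval, mul_assoc]

/-! ### The identity over ℝ -/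

/-- The Abel–Rothe convolution over ℝ, for `c ≠ b`, by induction on `n` using the
finite-difference equations and a polynomial-roots argument. -/
theorem coreReal (b c : ℝ) (hne : c ≠ b) :
    ∀ n, ∀ z w : ℝ, Af b c (z + w) n = rhsS b c z w n := by
  intro n
  induction n with
  | zero =>
    intro z w
    simp [Af_zero, rhsS, Bf]
  | succ n ih =>
    intro z w
    have he : (c - b) ≠ 0 := sub_ne_zero.mpr hne
    set P : Polynomial ℝ := APol b c z (n + 1) - RPol b c z (n + 1) with hP
    have hev : ∀ x : ℝ, P.eval x = Af b c (z + x) (n + 1) - rhsS b c z x (n + 1) := by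
      intro x
      rw [hP, Polynomial.eval_sub, APol_eval, RPol_eval]
    have hshift : ∀ x : ℝ, P.eval (x + (c - b)) = P.eval x := by
      intro x
      rw [hev, hev,
        show z + (x + (c - b)) = (z + x) + (c - b) by ring,
        Af_shift b c n (z + x),
        rhsS_shift b c z n (fun w' => ih z w') x,
        show (z + x) + c = z + (x + c) by ring]
      ring
    have h0 : P.eval 0 = 0 := by
      rw [hev, add_zero, rhsS_zero_right, sub_self]
    have hroots : ∀ j : ℕ, P.eval ((j : ℝ) * (c - b)) = 0 := by
      intro j
      induction j with
      | zero => simpa using h0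
      | succ j hj =>
        have h2 := hshift ((j : ℝ) * (c - b))
        rw [hj] at h2
        rw [show (((j + 1 : ℕ) : ℝ)) * (c - b) = (j : ℝ) * (c - b) + (c - b) by push_cast; ring]
        exact h2
    have hPzero : P = 0 := by
      apply Polynomial.eq_zero_of_infinite_isRoot
      apply Set.infinite_of_injective_forall_mem
        (f := fun j : ℕ => (j : ℝ) * (c - b))
      · intro a a' haa'
        exact Nat.cast_injective (mul_right_cancel₀ he haa')
      · intro j
        exact hroots j
    have hfin := hev w
    rw [hPzero, Polynomial.eval_zero] at hfin
    linarith [hfin]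

/-! ### Polynomial realization in the variable `c`, to remove the `c ≠ b` hypothesis -/

/-- `Af b · z m` as a polynomial in `c`. -/
noncomputable def AfC (b z : R) (m : ℕ) : Polynomial R :=
  ∏ k ∈ Finset.Icc 1 m, (Polynomial.C (z + (m - k) • b) + (k : Polynomial R) * Polynomial.X)

/-- `Bf b · w p` as a polynomial in `c`. -/
noncomputable def BfC (b w : R) (p : ℕ) : Polynomial R :=
  if p = 0 then 1
  else Polynomial.C w *
    ∏ k ∈ Finset.Icc 1 (p - 1), (Polynomial.C (w + (p - k) • b) + (k : Polynomial R) * Polynomial.X)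

/-- `rhsS b · z w n` as a polynomial in `c`. -/
noncomputable def rhsSC (b z w : R) (n : ℕ) : Polynomial R :=
  ∑ m ∈ Finset.range (n + 1), Polynomial.C (n.choose m : R) * AfC b z m * BfC b w (n - m)

lemma AfC_eval (b z : R) (m : ℕ) (c : R) : (AfC b z m).eval c = Af b c z m := by
  unfold AfC Af
  rw [Polynomial.eval_prod]
  refine Finset.prod_congr rfl fun k hk => ?_
  simp only [Polynomial.eval_add, Polynomial.eval_mul, Polynomial.eval_C, Polynomial.eval_X,
    Polynomial.eval_natCast, nsmul_eq_mul]
  ring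

lemma BfC_eval (b w : R) (p : ℕ) (c : R) : (BfC b w p).eval c = Bf b c w p := by
  unfold BfC Bf
  split_ifs with h
  · simp
  · rw [Polynomial.eval_mul, Polynomial.eval_C, Polynomial.eval_prod]
    congr 1
    refine Finset.prod_congr rfl fun k hk => ?_
    simp only [Polynomial.eval_add, Polynomial.eval_mul, Polynomial.eval_C, Polynomial.eval_X,
      Polynomial.eval_natCast, nsmul_eq_mul]
    ring

lemma rhsSC_eval (b z w : R) (n : ℕ) (c : R) : (rhsSC b z w n).eval c = rhsS b c z w n := by
  unfold rhsSC rhsS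
  rw [Polynomial.eval_finset_sum]
  refine Finset.sum_congr rfl fun m hm => ?_
  rw [Polynomial.eval_mul, Polynomial.eval_mul, Polynomial.eval_C, AfC_eval, BfC_eval]

/-- The Abel–Rothe convolution over ℝ, all parameters. -/
theorem realAll (b c z w : ℝ) (n : ℕ) : Af b c (z + w) n = rhsS b c z w n := by
  have key : (AfC b (z + w) n - rhsSC b z w n : Polynomial ℝ) = 0 := by
    apply Polynomial.eq_zero_of_infinite_isRoot
    have hinf : ({b} : Set ℝ)ᶜ.Infinite := (Set.finite_singleton b).infinite_compl
    refine Set.Infinite.mono ?_ hinf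
    intro x hx
    have hx' : x ≠ b := hx
    show Polynomial.IsRoot _ x
    rw [Polynomial.IsRoot, Polynomial.eval_sub, AfC_eval, rhsSC_eval, sub_eq_zero]
    exact coreReal b x hx' n z w
  have h := congrArg (Polynomial.eval c) key
  rw [Polynomial.eval_sub, AfC_eval, rhsSC_eval, Polynomial.eval_zero, sub_eq_zero] at h
  exact h

/-! ### Transfer to arbitrary commutative rings -/

lemma map_Af {S T : Type*} [CommRing S] [CommRing T] (φ : S →+* T) (b c z : S) (n : ℕ) :
    φ (Af b c z n) = Af (φ b) (φ c) (φ z) n := by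
  unfold Af
  rw [map_prod]
  exact Finset.prod_congr rfl fun k _ => by rw [map_add, map_add, map_nsmul, map_nsmul]

lemma map_Bf {S T : Type*} [CommRing S] [CommRing T] (φ : S →+* T) (b c w : S) (p : ℕ) :
    φ (Bf b c w p) = Bf (φ b) (φ c) (φ w) p := by
  unfold Bf
  split_ifs with h
  · exact map_one φ
  · rw [map_mul, map_prod]
    congr 1
    exact Finset.prod_congr rfl fun k _ => by rw [map_add, map_add, map_nsmul, map_nsmul]

lemma map_rhsS {S T : Type*} [CommRing S] [CommRing T] (φ : S →+* T) (b c z w : S) (n : ℕ) :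
    φ (rhsS b c z w n) = rhsS (φ b) (φ c) (φ z) (φ w) n := by
  unfold rhsS
  rw [map_sum]
  exact Finset.sum_congr rfl fun m _ => by
    rw [map_mul, map_mul, map_natCast, map_Af, map_Bf]

/-- The Abel–Rothe convolution over ℤ. -/
theorem intAll (b c z w : ℤ) (n : ℕ) : Af b c (z + w) n = rhsS b c z w n := by
  have h1 := map_Af (Int.castRingHom ℝ) b c (z + w) n
  have h2 := map_rhsS (Int.castRingHom ℝ) b c z w n
  have h3 := realAll (b : ℝ) (c : ℝ) (z : ℝ) (w : ℝ) n
  apply Int.cast_injective (α := ℝ)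
  show (Int.castRingHom ℝ) _ = (Int.castRingHom ℝ) _
  rw [h1, h2, map_add]
  simpa using h3

/-- The Abel–Rothe convolution in the universal ring. -/
theorem mvAll (n : ℕ) :
    Af (MvPolynomial.X 0) (MvPolynomial.X 1)
        (MvPolynomial.X 2 + MvPolynomial.X 3 : MvPolynomial (Fin 4) ℤ) n
      = rhsS (MvPolynomial.X 0) (MvPolynomial.X 1) (MvPolynomial.X 2) (MvPolynomial.X 3) n := by
  apply MvPolynomial.funext
  intro x
  rw [map_Af (MvPolynomial.eval x), map_rhsS (MvPolynomial.eval x)]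
  simp only [map_add, MvPolynomial.eval_X]
  exact intAll (x 0) (x 1) (x 2) (x 3) n

/-- The Abel–Rothe convolution over any commutative ring. -/
theorem abelRothe_general (b c z w : R) (n : ℕ) : Af b c (z + w) n = rhsS b c z w n := by
  set φ : MvPolynomial (Fin 4) ℤ →+* R :=
    (MvPolynomial.aeval (R := ℤ) (![b, c, z, w] : Fin 4 → R)).toRingHom with hφ
  have h := congrArg φ (mvAll n)
  rw [map_Af φ, map_rhsS φ, map_add] at h
  have e0 : φ (MvPolynomial.X 0) = b := by
    simp [hφ, Matrix.cons_val_zero]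
  have e1 : φ (MvPolynomial.X 1) = c := by
    simp [hφ, Matrix.cons_val_one, Matrix.head_cons]
  have e2 : φ (MvPolynomial.X 2) = z := by
    simp [hφ, Matrix.cons_val_two, Matrix.vecHead, Matrix.vecTail]
  have e3 : φ (MvPolynomial.X 3) = w := by
    simp [hφ, Matrix.cons_val_three, Matrix.vecHead, Matrix.vecTail]
  rwa [e0, e1, e2, e3] at h

/-- With constant parameters `x_{i,j} = b`, `y_j = c`, Strehl's convolution identity for
`|A| = n` specializes to the Abel--Rothe convolution. -/
theorem abel_rothe_convolution (b c z w : R) (n : ℕ) :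
    ∏ k ∈ Finset.Icc 1 n, (z + w + k • c + (n - k) • b) =
      ∑ m ∈ Finset.range (n + 1),
        (n.choose m : R) * (∏ k ∈ Finset.Icc 1 m, (z + k • c + (m - k) • b)) *
          (if m = n then 1
           else w * ∏ k ∈ Finset.Icc 1 (n - m - 1), (w + k • c + (n - m - k) • b)) := by
  have h := abelRothe_general b c z w n
  have hr : rhsS b c z w n =
      ∑ m ∈ Finset.range (n + 1),
        (n.choose m : R) * (∏ k ∈ Finset.Icc 1 m, (z + k • c + (m - k) • b)) *
          (if m = n then 1
           else w * ∏ k ∈ Finset.Icc 1 (n - m - 1), (w + k • c + (n - m - k) • b)) := by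
    unfold rhsS Af Bf
    refine Finset.sum_congr rfl fun m hm => ?_
    rw [Finset.mem_range] at hm
    by_cases hmn : m = n
    · subst hmn
      rw [if_pos rfl, Nat.sub_self, if_pos rfl]
    · rw [if_neg hmn, if_neg (by omega : ¬(n - m = 0))]
  rw [← hr, ← h]
  rfl
end
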